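/- arXiv:1705.01060 — 8 statements merged into one kernel-verified Lean document; each statement's English description precedes it below -/
import Mathlib

section
/- Let K be a finite extension of ℚ_p and let D be a disk (open or closed) in the algebraic closure of ℚ_p that is invariant under the absolute Galois group of K. If D contains an element a of degree n over K, then D contains an element b whose degree over K is at most p^s, where s is the p-adic valuation of n. -/
/-!
The roots of the minimal polynomial `f` of `a` over `K` are its Galois conjugates, so they all
lie in `D`; if `ρ` is their largest distance to `a`, the closed ball of radius `ρ` about `a` lies
in `D`. Put `N = p ^ v_p(n)`. The Hasse derivative `∂^(n-N) f` is defined over `K` and has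
degree `N`. Shifted by `a`, its coefficients satisfy `‖c_i‖ ≤ ρ ^ (N - i)` and its leading
coefficient `choose n N` is a `p`-adic unit by Lucas' theorem, so by the ultrametric inequality
each of its roots lies within `ρ` of `a`, hence in `D`.
-/

def IsDisk {Cp : Type*} [NormedField Cp] (D : Set Cp) : Prop :=
  ∃ (a : Cp) (r : ℝ), 0 < r ∧
    (D = {x | ‖x - a‖ ≤ r} ∨ D = {x | ‖x - a‖ < r})

open Polynomial Metric

theorem Nat.choose_prime_pow_mul_modEq (p : ℕ) [Fact p.Prime] (s m : ℕ) :
    (p ^ s * m).choose (p ^ s) ≡ m [MOD p] := by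
  induction s with
  | zero => simp [Nat.ModEq.refl]
  | succ s ih =>
    refine Choose.choose_modEq_choose_mod_mul_choose_div_nat.trans ?_
    have hp : 0 < p := Nat.pos_of_ne_zero (Fact.out : p.Prime).ne_zero
    rw [pow_succ, mul_right_comm, Nat.mul_mod_left, Nat.mul_mod_left,
      Nat.mul_div_cancel _ hp, Nat.mul_div_cancel _ hp, Nat.choose_self, one_mul]
    exact ih

theorem Nat.not_dvd_choose_pow_padicValNat (p : ℕ) [Fact p.Prime] {n : ℕ} (hn : n ≠ 0) :
    ¬ p ∣ n.choose (p ^ padicValNat p n) := by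
  set s := padicValNat p n
  obtain ⟨m, hm⟩ : p ^ s ∣ n := pow_padicValNat_dvd
  have hpm : ¬ p ∣ m := fun ⟨c, hc⟩ =>
    pow_succ_padicValNat_not_dvd (p := p) hn ⟨c, by rw [pow_succ, mul_assoc, ← hc, ← hm]⟩
  rw [hm, Nat.ModEq.dvd_iff (Nat.choose_prime_pow_mul_modEq p s m) dvd_rfl]
  exact hpm

theorem IsUltrametricDist.norm_multiset_sum_le_of_forall_le_of_nonneg {M : Type*}
    [SeminormedAddCommGroup M] [IsUltrametricDist M] {s : Multiset M} {C : ℝ} (hC : 0 ≤ C)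
    (h : ∀ x ∈ s, ‖x‖ ≤ C) : ‖s.sum‖ ≤ C := by
  induction s using Multiset.induction_on with
  | empty => simpa
  | cons a s ih =>
    rw [Multiset.sum_cons]
    exact (norm_add_le_max _ _).trans <| max_le (h a (Multiset.mem_cons_self a s))
      (ih fun x hx => h x (Multiset.mem_cons_of_mem hx))

theorem IsUltrametricDist.norm_sum_lt_of_forall_lt {ι M : Type*} [SeminormedAddCommGroup M]
    [IsUltrametricDist M] {s : Finset ι} {f : ι → M} {C : ℝ} (hC : 0 < C)
    (h : ∀ i ∈ s, ‖f i‖ < C) : ‖∑ i ∈ s, f i‖ < C := by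
  rcases s.eq_empty_or_nonempty with rfl | hs
  · simpa using hC
  · exact (hs.norm_sum_le_sup'_norm f).trans_lt ((Finset.sup'_lt_iff hs).2 h)

theorem Polynomial.taylor_multiset_prod_X_sub_C {R : Type*} [CommRing R] (r : R)
    (S : Multiset R) :
    taylor r (S.map fun y => X - C y).prod = ((S.map (· - r)).map fun z => X - C z).prod := by
  change taylorAlgHom r _ = _
  rw [map_multiset_prod, Multiset.map_map, Multiset.map_map]
  congr 1
  refine Multiset.map_congr rfl fun y _ => ?_
  simp only [Function.comp_apply, taylorAlgHom_apply, map_sub, taylor_X, taylor_C]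
  ring

theorem Polynomial.coeff_taylor_hasseDeriv {R : Type*} [CommSemiring R] (r : R) (f : R[X])
    (k i : ℕ) :
    (taylor r (hasseDeriv k f)).coeff i =
      ((i + k).choose k : R) * (taylor r f).coeff (i + k) := by
  have hcomp : hasseDeriv i (hasseDeriv k f) = (i + k).choose i • hasseDeriv (i + k) f := by
    simpa using LinearMap.congr_fun (hasseDeriv_comp (R := R) i k) f
  rw [taylor_coeff, taylor_coeff, hcomp, eval_smul, nsmul_eq_mul, Nat.choose_symm_add]

theorem Polynomial.map_hasseDeriv {R S : Type*} [Semiring R] [Semiring S] (φ : R →+* S)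
    (k : ℕ) (f : R[X]) : (hasseDeriv k f).map φ = hasseDeriv k (f.map φ) := by
  ext i
  simp [hasseDeriv_coeff]

section Ultrametric

variable {L : Type*} [NormedField L] [IsUltrametricDist L]

theorem Multiset.norm_esymm_le {S : Multiset L} {ρ : ℝ} (hρ : 0 ≤ ρ) (hS : ∀ r ∈ S, ‖r‖ ≤ ρ)
    (k : ℕ) : ‖S.esymm k‖ ≤ ρ ^ k := by
  refine IsUltrametricDist.norm_multiset_sum_le_of_forall_le_of_nonneg (by positivity) ?_
  simp only [Multiset.mem_map, Multiset.mem_powersetCard]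
  rintro _ ⟨t, ⟨hts, rfl⟩, rfl⟩
  change normHom t.prod ≤ _
  rw [map_multiset_prod]
  exact Multiset.prod_map_le_pow_card (fun x _ => norm_nonneg x)
    fun x hx => hS x (Multiset.subset_of_le hts hx)

theorem Multiset.norm_coeff_prod_X_sub_C_le {S : Multiset L} {ρ : ℝ} (hρ : 0 ≤ ρ)
    (hS : ∀ r ∈ S, ‖r‖ ≤ ρ) {j : ℕ} (hj : j ≤ card S) :
    ‖(S.map fun r => X - C r).prod.coeff j‖ ≤ ρ ^ (card S - j) := by
  rw [Multiset.prod_X_sub_C_coeff S hj, norm_mul, norm_pow, norm_neg, norm_one, one_pow, one_mul]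
  exact S.norm_esymm_le hρ hS _

theorem Polynomial.norm_le_of_isRoot {T : L[X]} (hT : T ≠ 0) {ρ : ℝ} (hρ : 0 ≤ ρ)
    (hcoeff : ∀ i < T.natDegree, ‖T.coeff i‖ ≤ ‖T.leadingCoeff‖ * ρ ^ (T.natDegree - i))
    {x : L} (hx : T.IsRoot x) : ‖x‖ ≤ ρ := by
  by_contra! hρx
  set N := T.natDegree
  have hlc : 0 < ‖T.leadingCoeff‖ := norm_pos_iff.2 (leadingCoeff_ne_zero.2 hT)
  have hlow : ‖∑ i ∈ Finset.range N, T.coeff i * x ^ i‖ < ‖T.leadingCoeff * x ^ N‖ := by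
    have hx0 : 0 < ‖x‖ := hρ.trans_lt hρx
    refine IsUltrametricDist.norm_sum_lt_of_forall_lt (by rw [norm_mul, norm_pow]; positivity)
      fun i hi => ?_
    have hi : i < N := Finset.mem_range.1 hi
    calc ‖T.coeff i * x ^ i‖ ≤ ‖T.leadingCoeff‖ * ρ ^ (N - i) * ‖x‖ ^ i := by
          rw [norm_mul, norm_pow]; gcongr; exact hcoeff i hi
      _ < ‖T.leadingCoeff‖ * ‖x‖ ^ (N - i) * ‖x‖ ^ i := by
          gcongr
          exact Nat.sub_ne_zero_of_lt hi
      _ = ‖T.leadingCoeff * x ^ N‖ := by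
          rw [mul_assoc, ← pow_add, Nat.sub_add_cancel hi.le, norm_mul, norm_pow]
  have heval :
      T.eval x = ∑ i ∈ Finset.range N, T.coeff i * x ^ i + T.leadingCoeff * x ^ N := by
    rw [eval_eq_sum_range, Finset.sum_range_succ, leadingCoeff]
  have := IsUltrametricDist.norm_add_eq_max_of_norm_ne_norm hlow.ne
  rw [← heval, hx.eq_zero, norm_zero, max_eq_right hlow.le] at this
  exact hlow.not_ge (this ▸ norm_nonneg _)

theorem Polynomial.norm_coeff_taylor_le {g : L[X]} (hg : g.Monic) (hsplit : g.Splits) {a : L}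
    {ρ : ℝ} (hρ : 0 ≤ ρ) (hroots : ∀ y ∈ g.roots, ‖y - a‖ ≤ ρ) {j : ℕ} (hj : j ≤ g.natDegree) :
    ‖(taylor a g).coeff j‖ ≤ ρ ^ (g.natDegree - j) := by
  have hcard : Multiset.card (g.roots.map (· - a)) = g.natDegree := by
    rw [Multiset.card_map, (splits_iff_card_roots.1 hsplit)]
  conv_lhs => rw [hsplit.eq_prod_roots_of_monic hg, taylor_multiset_prod_X_sub_C]
  rw [← hcard]
  exact Multiset.norm_coeff_prod_X_sub_C_le hρ (Multiset.forall_mem_map_iff.2 hroots)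
    (hcard ▸ hj)

theorem Polynomial.exists_isRoot_hasseDeriv_norm_sub_le [IsAlgClosed L] {g : L[X]}
    (hg : g.Monic) {a : L} {ρ : ℝ} (hρ : 0 ≤ ρ) (hroots : ∀ y ∈ g.roots, ‖y - a‖ ≤ ρ) {d : ℕ}
    (hd : d < g.natDegree) (hunit : ‖(g.natDegree.choose d : L)‖ = 1) :
    ∃ b, ‖b - a‖ ≤ ρ ∧ (hasseDeriv d g).IsRoot b := by
  set n := g.natDegree
  set Q := taylor a (hasseDeriv d g)
  have hQtop : Q.coeff (n - d) = (n.choose d : L) := by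
    rw [coeff_taylor_hasseDeriv, Nat.sub_add_cancel hd.le, coeff_taylor_natDegree,
      hg.leadingCoeff, mul_one]
  have hQtop_ne : Q.coeff (n - d) ≠ 0 := by
    rw [← norm_ne_zero_iff, hQtop, hunit]; exact one_ne_zero
  have hQdeg : Q.natDegree = n - d := natDegree_eq_of_le_of_coeff_ne_zero
    ((natDegree_taylor _ a).trans_le (natDegree_hasseDeriv_le g d)) hQtop_ne
  have hQlc : ‖Q.leadingCoeff‖ = 1 := by rw [leadingCoeff, hQdeg, hQtop, hunit]
  have hQne : Q ≠ 0 := fun h => hQtop_ne (by rw [h, coeff_zero])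
  obtain ⟨x, hx⟩ := IsAlgClosed.exists_root Q
    (by rw [degree_eq_natDegree hQne, hQdeg]; norm_cast; omega)
  refine ⟨x + a, ?_, ?_⟩
  · rw [add_sub_cancel_right]
    refine norm_le_of_isRoot hQne hρ (fun i hi => ?_) hx
    rw [hQlc, one_mul, hQdeg, coeff_taylor_hasseDeriv, norm_mul, Nat.sub_sub, add_comm d i]
    have hchoose := IsUltrametricDist.norm_natCast_le_one L ((i + d).choose d)
    exact (mul_le_of_le_one_left (norm_nonneg _) hchoose).trans
      (norm_coeff_taylor_le hg (IsAlgClosed.splits g) hρ hroots (by omega))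
  · rwa [IsRoot, ← taylor_eval]

theorem IsDisk.closedBall_subset {D : Set L} (hD : IsDisk D) {a y : L} (ha : a ∈ D)
    (hy : y ∈ D) : closedBall a ‖y - a‖ ⊆ D := by
  obtain ⟨c, r, -, rfl | rfl⟩ := hD
  · have hball : {x | ‖x - c‖ ≤ r} = closedBall c r :=
      Set.ext fun x => mem_closedBall_iff_norm.symm
    rw [hball] at ha hy ⊢
    rw [IsUltrametricDist.closedBall_eq_of_mem ha] at hy ⊢
    exact closedBall_subset_closedBall (mem_closedBall_iff_norm.1 hy)
  · have hball : {x | ‖x - c‖ < r} = ball c r := Set.ext fun x => mem_ball_iff_norm.symm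
    rw [hball] at ha hy ⊢
    rw [IsUltrametricDist.ball_eq_of_mem ha] at hy ⊢
    exact closedBall_subset_ball (mem_ball_iff_norm.1 hy)

end Ultrametric

theorem mem_of_aeval_minpoly_eq_zero_of_forall_algEquiv_image_eq {F E : Type*} [Field F]
    [Field E] [Algebra F E] [Normal F E] {D : Set E} (hD : ∀ σ : E ≃ₐ[F] E, σ '' D = D)
    {a y : E} (ha : a ∈ D) (hy : aeval y (minpoly F a) = 0) : y ∈ D := by
  have ha_int : IsIntegral F a := Algebra.IsIntegral.isIntegral a
  have hmin : minpoly F a = minpoly F y :=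
    minpoly.eq_of_irreducible_of_monic (minpoly.irreducible ha_int) hy (minpoly.monic ha_int)
  obtain ⟨σ, rfl⟩ := (Normal.minpoly_eq_iff_mem_orbit E).1 hmin.symm
  rw [← hD σ]
  exact ⟨a, ha, rfl⟩

theorem IsDisk.exists_closedBall_subset_of_forall_algEquiv_image_eq {F L : Type*} [Field F]
    [NormedField L] [IsUltrametricDist L] [Algebra F L] [Normal F L] {D : Set L} (hD : IsDisk D)
    (hinv : ∀ σ : L ≃ₐ[F] L, σ '' D = D) {a : L} (ha : a ∈ D) :
    ∃ ρ, 0 ≤ ρ ∧ closedBall a ρ ⊆ D ∧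
      ∀ y ∈ ((minpoly F a).map (algebraMap F L)).roots, ‖y - a‖ ≤ ρ := by
  classical
  have hf : minpoly F a ≠ 0 := minpoly.ne_zero (Algebra.IsIntegral.isIntegral a)
  set R := ((minpoly F a).map (algebraMap F L)).roots
  have hR : ∀ y ∈ R, y ∈ D := fun y hy =>
    mem_of_aeval_minpoly_eq_zero_of_forall_algEquiv_image_eq hinv ha ((mem_roots_map hf).1 hy)
  obtain ⟨y₀, hy₀, hmax⟩ := R.toFinset.exists_max_image (‖· - a‖)
    ⟨a, by rw [Multiset.mem_toFinset, mem_roots_map hf, ← aeval_def, minpoly.aeval]⟩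
  exact ⟨‖y₀ - a‖, norm_nonneg _, hD.closedBall_subset ha (hR y₀ (Multiset.mem_toFinset.1 hy₀)),
    fun y hy => hmax y (Multiset.mem_toFinset.2 hy)⟩

theorem IntermediateField.finrank_adjoin_simple_le_natDegree {F E : Type*} [Field F] [Field E]
    [Algebra F E] {x : E} (hx : IsIntegral F x) {f : F[X]} (hf : f ≠ 0) (hfx : aeval x f = 0) :
    Module.finrank F (adjoin F {x}) ≤ f.natDegree := by
  rw [adjoin.finrank hx]
  exact natDegree_le_natDegree (minpoly.degree_le_of_ne_zero F x hf hfx)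

theorem IntermediateField.finrank_adjoin_simple_le_of_isRoot_hasseDeriv {F E : Type*} [Field F]
    [CharZero F] [Field E] [Algebra F E] {x : E} (hx : IsIntegral F x) {f : F[X]} {d : ℕ}
    (hd : d < f.natDegree) (hroot : (hasseDeriv d (f.map (algebraMap F E))).IsRoot x) :
    Module.finrank F (adjoin F {x}) ≤ f.natDegree - d := by
  have hdeg : (hasseDeriv d f).natDegree = f.natDegree - d := natDegree_hasseDeriv f d
  rw [← hdeg]
  refine finrank_adjoin_simple_le_natDegree hx (ne_zero_of_natDegree_gt (n := 0) (by omega)) ?_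
  rwa [aeval_def, eval₂_eq_eval_map, map_hasseDeriv]

theorem norm_natCast_eq_one_of_not_dvd {p : ℕ} [Fact p.Prime] {L : Type*} [NormedField L]
    [Algebra ℚ_[p] L] (hnorm : ∀ x : ℚ_[p], ‖algebraMap ℚ_[p] L x‖ = ‖x‖) {k : ℕ}
    (hk : ¬ p ∣ k) : ‖(k : L)‖ = 1 := by
  rw [← map_natCast (algebraMap ℚ_[p] L), hnorm, Padic.norm_natCast_eq_one_iff]
  exact (Nat.Prime.coprime_iff_not_dvd Fact.out).2 hk

theorem statement_0_general (p : ℕ) [Fact p.Prime] (Cp : Type*) [NormedField Cp]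
    [IsUltrametricDist Cp] [Algebra ℚ_[p] Cp] [IsAlgClosed Cp]
    (halg : Algebra.IsAlgebraic ℚ_[p] Cp)
    (hnorm : ∀ x : ℚ_[p], ‖algebraMap ℚ_[p] Cp x‖ = ‖x‖)
    (K : IntermediateField ℚ_[p] Cp)
    (D : Set Cp) (hD : IsDisk D)
    (hinv : ∀ σ : Cp ≃ₐ[K] Cp, σ '' D = D)
    (n : ℕ) (a : Cp) (ha : a ∈ D)
    (hdeg : Module.finrank K (IntermediateField.adjoin K {a}) = n) :
    ∃ b ∈ D, Module.finrank K (IntermediateField.adjoin K {b}) ≤ p ^ (padicValNat p n) := by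
  have := halg.tower_top K
  have : IsAlgClosure K Cp := ⟨inferInstance, inferInstance⟩
  have ha_int : IsIntegral K a := Algebra.IsIntegral.isIntegral a
  have hfdeg : (minpoly K a).natDegree = n := by
    rw [← hdeg, IntermediateField.adjoin.finrank ha_int]
  have hn : n ≠ 0 := hfdeg ▸ (minpoly.natDegree_pos ha_int).ne'
  set N := p ^ padicValNat p n
  have hN : 0 < N := pow_pos (Fact.out : p.Prime).pos _
  have hNn : N ≤ n := Nat.le_of_dvd (Nat.pos_of_ne_zero hn) pow_padicValNat_dvd
  obtain ⟨ρ, hρ, hball, hroots⟩ := hD.exists_closedBall_subset_of_forall_algEquiv_image_eq hinv ha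
  have hunit : ‖(n.choose (n - N) : Cp)‖ = 1 := by
    rw [Nat.choose_symm hNn]
    exact norm_natCast_eq_one_of_not_dvd hnorm (Nat.not_dvd_choose_pow_padicValNat p hn)
  obtain ⟨b, hba, hb⟩ := exists_isRoot_hasseDeriv_norm_sub_le ((minpoly.monic ha_int).map _) hρ
    hroots (d := n - N) (by rw [natDegree_map]; omega) (by rwa [natDegree_map, hfdeg])
  refine ⟨b, hball (mem_closedBall_iff_norm.2 hba), ?_⟩
  calc Module.finrank K (IntermediateField.adjoin K {b}) ≤ (minpoly K a).natDegree - (n - N) :=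
        IntermediateField.finrank_adjoin_simple_le_of_isRoot_hasseDeriv
          (Algebra.IsIntegral.isIntegral b) (by omega) hb
    _ = N := by omega

/-- if a disk `D`, invariant under the absolute Galois group of a finite
extension `K` of `ℚ_p`, contains an element `a` of degree `n` over `K`, then it contains
an element `b` of degree at most `p ^ (v_p n)` over `K`.  Here the algebraic closure of
`ℚ_p` is modelled as an algebraically closed normed field `Cp`, algebraic over `ℚ_p`,
whose norm extends the `p`-adic norm. -/
theorem statement_0 (p : ℕ) [Fact p.Prime] (Cp : Type*) [NormedField Cp]
    [IsUltrametricDist Cp] [Algebra ℚ_[p] Cp] [IsAlgClosed Cp]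
    (halg : Algebra.IsAlgebraic ℚ_[p] Cp)
    (hnorm : ∀ x : ℚ_[p], ‖algebraMap ℚ_[p] Cp x‖ = ‖x‖)
    (K : IntermediateField ℚ_[p] Cp) [FiniteDimensional ℚ_[p] K]
    (D : Set Cp) (hD : IsDisk D)
    (hinv : ∀ σ : Cp ≃ₐ[K] Cp, σ '' D = D)
    (n : ℕ) (a : Cp) (ha : a ∈ D)
    (hdeg : Module.finrank K (IntermediateField.adjoin K {a}) = n) :
    ∃ b ∈ D, Module.finrank K (IntermediateField.adjoin K {b}) ≤ p ^ (padicValNat p n) :=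
  statement_0_general p Cp halg hnorm K D hD hinv n a ha hdeg
end

section
/- Let E be a finite extension of ℚ_p and D a disk in the algebraic closure of ℚ_p invariant under G_E. If there exists a finite unramified extension F of E with F ∩ D nonempty, then E ∩ D is nonempty. -/
/-- The value group `‖E^×‖` of an intermediate field `E` of `Cp / ℚ_p`, as a subgroup of
`ℝˣ`. -/
noncomputable def valueGroup (p : ℕ) [Fact p.Prime] (Cp : Type*) [NormedField Cp]
    [Algebra ℚ_[p] Cp] (E : IntermediateField ℚ_[p] Cp) : Subgroup ℝˣ :=
  Subgroup.closure {u : ℝˣ | ∃ x : Cp, x ∈ E ∧ (u : ℝ) = ‖x‖}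

/-- The ramification index `e_{F/E}` of an extension `E ≤ F` of finite extensions of
`ℚ_p` inside `Cp`, defined as the index of the value group of `E` inside that of `F`. -/
noncomputable def ramIdx (p : ℕ) [Fact p.Prime] (Cp : Type*) [NormedField Cp]
    [Algebra ℚ_[p] Cp] (E F : IntermediateField ℚ_[p] Cp) : ℕ :=
  (valueGroup p Cp E).relIndex (valueGroup p Cp F)

/-!
Take `x ∈ F ∩ D` and a best approximation `y ∈ E` of `x`, and suppose `y ∉ D`. Every
`E`-conjugate of `x` lies in the disk `D`, hence is closer to `x` than `y` is. As `F/E` is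
unramified, `‖x - y‖ = ‖c‖` for some `c ∈ E`, so `w = (x - y) / c` lies in the closed unit
ball and all its `E`-conjugates are congruent to it modulo the maximal ideal. Hence the
minimal polynomial of `w` over `E` is congruent to `(X - w) ^ n`; writing `n = p ^ a * m`
with `p ∤ m`, its coefficient of `X ^ (n - p ^ a)` yields `s ∈ E` with `s ≡ w ^ p ^ a`.
The residue of `w` lies in a finite field, so `w ^ p ^ (d * a) ≡ w` for some `d > 0`, and
`e = s ^ p ^ ((d - 1) * a) ∈ E` satisfies `e ≡ w`. Then `y + c * e ∈ E` is closer to `x`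
than `y`, a contradiction.
-/

open Polynomial IsLocalRing IsUltrametricDist Metric

section Ultrametric
variable {K : Type*} [NormedField K] [IsUltrametricDist K]

variable (K) in
noncomputable abbrev closedUnitBall : ValuationSubring K :=
  (NormedField.valuation (K := K)).valuationSubring

theorem mem_closedUnitBall_iff {x : K} : x ∈ closedUnitBall K ↔ ‖x‖ ≤ 1 := by
  simp [Valuation.mem_valuationSubring_iff, NormedField.valuation_apply, ← NNReal.coe_le_coe]

theorem closedUnitBall.isUnit_iff_norm_eq_one {a : closedUnitBall K} :
    IsUnit a ↔ ‖(a : K)‖ = 1 := by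
  rw [(Valuation.valuationSubring.integers _).isUnit_iff_valuation_eq_one,
    NormedField.valuation_apply, ← NNReal.coe_eq_one]
  rfl

theorem closedUnitBall.residue_eq_residue_iff {a b : closedUnitBall K} :
    residue (closedUnitBall K) a = residue (closedUnitBall K) b ↔ ‖(a : K) - b‖ < 1 := by
  rw [← sub_eq_zero, ← map_sub, residue_eq_zero_iff, Valuation.mem_maximalIdeal_iff,
    NormedField.valuation_apply, ← NNReal.coe_lt_coe]
  simp

theorem norm_pow_sub_pow_le {u v : K} (hu : ‖u‖ ≤ 1) (hv : ‖v‖ ≤ 1) (N : ℕ) :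
    ‖u ^ N - v ^ N‖ ≤ ‖u - v‖ := by
  rw [← geom_sum₂_mul, norm_mul]
  refine mul_le_of_le_one_left (norm_nonneg _)
    (norm_sum_le_of_forall_le_of_nonneg zero_le_one fun i _ => ?_)
  rw [norm_mul, norm_pow, norm_pow]
  exact mul_le_one₀ (pow_le_one₀ (norm_nonneg u) hu) (by positivity)
    (pow_le_one₀ (norm_nonneg v) hv)

theorem gaussNorm_X_sub_C_le_one {a : K} (ha : ‖a‖ ≤ 1) :
    (X - C a).gaussNorm (NormedField.toAbsoluteValue K) 1 ≤ 1 := by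
  rw [sub_eq_add_neg, ← C_neg]
  refine (isNonarchimedean_gaussNorm _ isNonarchimedean_norm zero_le_one _ _).trans
    (max_le ?_ ?_)
  · rw [← monomial_one_one_eq_X, gaussNorm_monomial]
    simp
  · rw [gaussNorm_C]
    exact (norm_neg a).trans_le ha

theorem gaussNorm_prod_X_sub_C_sub_pow_lt_one {w : K} (hw : ‖w‖ ≤ 1) (s : Multiset K)
    (hs : ∀ ρ ∈ s, ‖ρ - w‖ < 1) :
    ((s.map fun ρ => X - C ρ).prod - (X - C w) ^ Multiset.card s).gaussNorm
      (NormedField.toAbsoluteValue K) 1 < 1 := by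
  have hna : IsNonarchimedean (NormedField.toAbsoluteValue K) := isNonarchimedean_norm
  induction s using Multiset.induction with
  | empty => simp
  | cons ρ s ih =>
    have hρw := hs ρ (Multiset.mem_cons_self ρ s)
    have hρ : ‖ρ‖ ≤ 1 := by
      simpa using (norm_add_le_max (ρ - w) w).trans (max_le hρw.le hw)
    rw [Multiset.map_cons, Multiset.prod_cons, Multiset.card_cons, pow_succ',
      show ∀ A B : K[X], (X - C ρ) * A - (X - C w) * B = (X - C ρ) * (A - B) + C (w - ρ) * B by
        intro A B; rw [C_sub]; ring]
    refine (isNonarchimedean_gaussNorm _ hna zero_le_one _ _).trans_lt (max_lt ?_ ?_)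
    · rw [gaussNorm_mul hna one_pos]
      exact mul_lt_one_of_nonneg_of_lt_one_right (gaussNorm_X_sub_C_le_one hρ)
        (gaussNorm_nonneg _ _ zero_le_one) (ih fun ρ' h => hs ρ' (Multiset.mem_cons_of_mem h))
    · have := gaussNorm_isAbsoluteValue hna one_pos
      rw [gaussNorm_mul hna one_pos, gaussNorm_C, IsAbsoluteValue.abv_pow (gaussNorm _ 1)]
      refine mul_lt_one_of_nonneg_of_lt_one_left (norm_nonneg (w - ρ)) ?_
        (pow_le_one₀ (gaussNorm_nonneg _ _ zero_le_one) (gaussNorm_X_sub_C_le_one hw))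
      rwa [norm_sub_rev] at hρw

end Ultrametric

theorem norm_coeff_minpoly_le_one {K L : Type*} [NontriviallyNormedField K] [CompleteSpace K]
    [IsUltrametricDist K] [NormedField L] [NormedAlgebra K L] [Algebra.IsAlgebraic K L] {x : L}
    (hx : ‖x‖ ≤ 1) (i : ℕ) : ‖(minpoly K x).coeff i‖ ≤ 1 := by
  rw [NormedAlgebra.norm_eq_spectralNorm K] at hx
  exact (spectralValue_le_one_iff (minpoly.monic (Algebra.IsIntegral.isIntegral x))).mp hx i

open IntermediateField in
theorem IsIntegral.exists_pow_natCard_pow_mul_eq_self {F K : Type*} [Field F] [Finite F]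
    [Field K] [Algebra F K] {x : K} (hx : IsIntegral F x) :
    ∃ f > 0, ∀ k, x ^ Nat.card F ^ (f * k) = x := by
  have := adjoin.finiteDimensional hx
  have : Finite F⟮x⟯ := Module.finite_of_finite F
  let := Fintype.ofFinite F⟮x⟯
  refine ⟨Module.finrank F F⟮x⟯, Module.finrank_pos, fun k => ?_⟩
  have hfix := FiniteField.pow_card_pow k (AdjoinSimple.gen F x)
  rw [Fintype.card_eq_nat_card, Module.natCard_eq_pow_finrank (K := F), ← pow_mul] at hfix
  simpa using congrArg Subtype.val hfix

section Residue
variable {p : ℕ} [Fact p.Prime] {L : Type*} [NormedField L] [NormedAlgebra ℚ_[p] L]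
  [Algebra.IsAlgebraic ℚ_[p] L]

theorem exists_monic_map_coe_eq_minpoly {x : L} (hx : ‖x‖ ≤ 1) :
    ∃ Q : ℤ_[p][X], Q.Monic ∧ Q.map PadicInt.Coe.ringHom = minpoly ℚ_[p] x := by
  have hlifts : minpoly ℚ_[p] x ∈ lifts PadicInt.Coe.ringHom :=
    (lifts_iff_coeff_lifts _).mpr fun i => ⟨⟨_, norm_coeff_minpoly_le_one hx i⟩, rfl⟩
  obtain ⟨Q, hQ, -, hmonic⟩ :=
    lifts_and_natDegree_eq_and_monic hlifts (minpoly.monic (Algebra.IsIntegral.isIntegral x))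
  exact ⟨Q, hmonic, hQ⟩

variable [IsUltrametricDist L]

variable (L) in
noncomputable def PadicInt.toClosedUnitBall : ℤ_[p] →+* closedUnitBall L :=
  ((algebraMap ℚ_[p] L).comp PadicInt.Coe.ringHom).codRestrict (closedUnitBall L) fun z =>
    mem_closedUnitBall_iff.mpr <| by
      rw [RingHom.comp_apply, norm_algebraMap']
      exact z.norm_le_one

instance : IsLocalHom (PadicInt.toClosedUnitBall (p := p) L) where
  map_nonunit z hz := by
    rw [closedUnitBall.isUnit_iff_norm_eq_one, PadicInt.toClosedUnitBall,
      RingHom.codRestrict_apply, RingHom.comp_apply, norm_algebraMap'] at hz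
    exact PadicInt.isUnit_iff.mpr hz

theorem isIntegralElem_residue (w : closedUnitBall L) :
    (ResidueField.map (PadicInt.toClosedUnitBall (p := p) L)).IsIntegralElem
      (residue (closedUnitBall L) w) := by
  obtain ⟨Q, hmonic, hQ⟩ :=
    exists_monic_map_coe_eq_minpoly (p := p) (mem_closedUnitBall_iff.mp w.2)
  have hroot : Q.eval₂ (PadicInt.toClosedUnitBall L) w = 0 := by
    apply (closedUnitBall L).toSubring.subtype_injective
    have hcomp : (closedUnitBall L).toSubring.subtype.comp (PadicInt.toClosedUnitBall L) =
        (algebraMap ℚ_[p] L).comp PadicInt.Coe.ringHom := rfl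
    rw [hom_eval₂, hcomp, ← eval₂_map, hQ, ← aeval_def]
    exact (minpoly.aeval ℚ_[p] (w : L)).trans (map_zero _).symm
  refine ⟨Q.map (residue ℤ_[p]), hmonic.map _, ?_⟩
  rw [eval₂_map, ResidueField.map_comp_residue, ← hom_eval₂, hroot, map_zero]

theorem exists_forall_norm_pow_prime_pow_mul_sub_lt_one {w : L} (hw : ‖w‖ ≤ 1) :
    ∃ d > 0, ∀ k, ‖w ^ p ^ (d * k) - w‖ < 1 := by
  let := (ResidueField.map (PadicInt.toClosedUnitBall (p := p) L)).toAlgebra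
  have : Finite (ResidueField ℤ_[p]) :=
    .of_equiv _ (PadicInt.residueField (p := p)).symm.toEquiv
  have hcard : Nat.card (ResidueField ℤ_[p]) = p := by
    rw [Nat.card_congr (PadicInt.residueField (p := p)).toEquiv, Nat.card_zmod]
  obtain ⟨d, hd, hfix⟩ := IsIntegral.exists_pow_natCard_pow_mul_eq_self
    (isIntegralElem_residue (p := p) ⟨w, mem_closedUnitBall_iff.mpr hw⟩)
  refine ⟨d, hd, fun k => ?_⟩
  have hk := hfix k
  rwa [hcard, ← map_pow, closedUnitBall.residue_eq_residue_iff] at hk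

end Residue

theorem exists_algEquiv_apply_eq_of_mem_roots {K L : Type*} [Field K] [Field L] [IsAlgClosed L]
    [Algebra K L] [Algebra.IsAlgebraic K L] {w ρ : L}
    (hρ : ρ ∈ ((minpoly K w).map (algebraMap K L)).roots) : ∃ σ : L ≃ₐ[K] L, σ w = ρ := by
  have : IsAlgClosure K L := ⟨inferInstance, inferInstance⟩
  have := IsAlgClosure.normal K L
  refine minpoly.exists_algEquiv_of_root' (Algebra.IsAlgebraic.isAlgebraic w) ?_
  rwa [mem_roots_map_of_injective (algebraMap K L).injective
    (minpoly.ne_zero (Algebra.IsIntegral.isIntegral w))] at hρ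

theorem norm_coeff_minpoly_sub_coeff_X_sub_C_pow_lt_one {K L : Type*} [Field K] [NormedField L]
    [IsUltrametricDist L] [IsAlgClosed L] [Algebra K L] [Algebra.IsAlgebraic K L] {w : L}
    (hw : ‖w‖ ≤ 1) (hconj : ∀ σ : L ≃ₐ[K] L, ‖σ w - w‖ < 1) (k : ℕ) :
    ‖((minpoly K w).map (algebraMap K L)).coeff k -
      ((X - C w) ^ (minpoly K w).natDegree).coeff k‖ < 1 := by
  set P := (minpoly K w).map (algebraMap K L)
  have hsplit := IsAlgClosed.splits P
  have hroots : ∀ ρ ∈ P.roots, ‖ρ - w‖ < 1 := fun ρ hρ => by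
    obtain ⟨σ, rfl⟩ := exists_algEquiv_apply_eq_of_mem_roots hρ
    exact hconj σ
  have hgauss := gaussNorm_prod_X_sub_C_sub_pow_lt_one hw P.roots hroots
  rw [← hsplit.eq_prod_roots_of_monic ((minpoly.monic (Algebra.IsIntegral.isIntegral w)).map _),
    ← hsplit.natDegree_eq_card_roots, natDegree_map] at hgauss
  have hcoeff := (le_gaussNorm _ _ zero_le_one k).trans_lt hgauss
  rw [one_pow, mul_one, coeff_sub] at hcoeff
  exact hcoeff

theorem not_dvd_choose_pow_mul {p a m : ℕ} [Fact p.Prime] (hm : ¬p ∣ m) :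
    ¬p ∣ (p ^ a * m).choose (p ^ a) := by
  have h := Choose.choose_pow_mul_pow_mul_modEq_choose_nat (p := p) (k := a) (a := m) (b := 1)
  rw [mul_one, Nat.choose_one_right] at h
  rwa [h.dvd_iff dvd_rfl]

section Conjugates
variable {p : ℕ} [Fact p.Prime] {L : Type*} [NormedField L] [IsUltrametricDist L]
  [NormedAlgebra ℚ_[p] L] [Algebra.IsAlgebraic ℚ_[p] L] [IsAlgClosed L]

theorem exists_mem_norm_sub_pow_prime_pow_lt_one (E : IntermediateField ℚ_[p] L) {w : L}
    (hw : ‖w‖ ≤ 1) (hconj : ∀ σ : L ≃ₐ[E] L, ‖σ w - w‖ < 1) :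
    ∃ a, ∃ s ∈ E, ‖s - w ^ p ^ a‖ < 1 := by
  have : Algebra.IsAlgebraic E L := .tower_top (K := ℚ_[p]) E
  set n := (minpoly E w).natDegree
  obtain ⟨a, m, hm, hn⟩ := Nat.exists_eq_pow_mul_and_not_dvd (n := n)
    (minpoly.natDegree_pos (Algebra.IsIntegral.isIntegral (R := E) w)).ne' p
    (Fact.out : p.Prime).ne_one
  have hpa : p ^ a ≤ n :=
    hn ▸ Nat.le_mul_of_pos_right _ (Nat.pos_of_ne_zero (by rintro rfl; simp at hm))
  have hcoeff : ((X - C w) ^ n).coeff (n - p ^ a) = (-w) ^ p ^ a * (n.choose (p ^ a) : L) := by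
    rw [sub_eq_add_neg, ← C_neg, coeff_X_add_C_pow, Nat.sub_sub_self hpa, Nat.choose_symm hpa]
  -- `n.choose (p ^ a) ≡ m` modulo `p` by Lucas' theorem, so it is a `p`-adic unit
  have hχ : ‖(n.choose (p ^ a) : L)‖ = 1 := by
    rw [← map_natCast (algebraMap ℚ_[p] L), norm_algebraMap', Padic.norm_natCast_eq_one_iff,
      Nat.Prime.coprime_iff_not_dvd Fact.out, hn]
    exact not_dvd_choose_pow_mul hm
  set u : L := (-1) ^ p ^ a / n.choose (p ^ a)
  have hu : ‖u‖ = 1 := by simp [u, hχ]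
  have huE : u ∈ E := div_mem (pow_mem (neg_mem (one_mem E)) _) (natCast_mem E _)
  have hcoeffE : ((minpoly E w).map (algebraMap E L)).coeff (n - p ^ a) ∈ E := by
    rw [coeff_map]
    exact SetLike.coe_mem _
  refine ⟨a, u * ((minpoly E w).map (algebraMap E L)).coeff (n - p ^ a),
    mul_mem huE hcoeffE, ?_⟩
  have hχ0 : (n.choose (p ^ a) : L) ≠ 0 := norm_ne_zero_iff.mp (hχ ▸ one_ne_zero)
  have hw' : u * ((-w) ^ p ^ a * (n.choose (p ^ a) : L)) = w ^ p ^ a := by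
    simp only [u]
    field_simp
    rw [← mul_pow, neg_one_mul, neg_neg]
  rw [← hw', ← mul_sub, norm_mul, hu, one_mul, ← hcoeff]
  exact norm_coeff_minpoly_sub_coeff_X_sub_C_pow_lt_one hw hconj _

theorem exists_mem_norm_sub_lt_one (E : IntermediateField ℚ_[p] L) {w : L} (hw : ‖w‖ ≤ 1)
    (hconj : ∀ σ : L ≃ₐ[E] L, ‖σ w - w‖ < 1) : ∃ e ∈ E, ‖w - e‖ < 1 := by
  obtain ⟨a, s, hsE, hs⟩ := exists_mem_norm_sub_pow_prime_pow_lt_one E hw hconj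
  obtain ⟨d, hd, hfix⟩ := exists_forall_norm_pow_prime_pow_mul_sub_lt_one (p := p) hw
  have hwa : ‖w ^ p ^ a‖ ≤ 1 := by rw [norm_pow]; exact pow_le_one₀ (norm_nonneg _) hw
  have hsa : ‖s‖ ≤ 1 := by
    simpa using (norm_add_le_max (s - w ^ p ^ a) (w ^ p ^ a)).trans (max_le hs.le hwa)
  have hexp : (w ^ p ^ a) ^ p ^ ((d - 1) * a) = w ^ p ^ (d * a) := by
    rw [← pow_mul, ← pow_add]
    congr 2
    rw [add_comm, ← add_one_mul, Nat.sub_one_add_one hd.ne']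
  refine ⟨s ^ p ^ ((d - 1) * a), pow_mem hsE _, ?_⟩
  have hclose : ‖w ^ p ^ (d * a) - s ^ p ^ ((d - 1) * a)‖ < 1 := by
    rw [← hexp, norm_sub_rev]
    exact (norm_pow_sub_pow_le hsa hwa _).trans_lt hs
  have hfix_a := hfix a
  rw [norm_sub_rev] at hfix_a
  simpa using (norm_add_le_max _ _).trans_lt (max_lt hfix_a hclose)

theorem exists_mem_norm_sub_lt (E : IntermediateField ℚ_[p] L) {x c : L} (hc : c ∈ E)
    (hxc : ‖x‖ ≤ ‖c‖) (hconj : ∀ σ : L ≃ₐ[E] L, ‖σ x - x‖ < ‖c‖) :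
    ∃ e ∈ E, ‖x - e‖ < ‖c‖ := by
  have hc0 : 0 < ‖c‖ := (norm_nonneg _).trans_lt (hconj 1)
  obtain ⟨e, heE, he⟩ := exists_mem_norm_sub_lt_one E (w := x / c)
    (by rw [norm_div]; exact div_le_one_of_le₀ hxc hc0.le) fun σ => by
      rw [map_div₀, show σ c = c from σ.commutes ⟨c, hc⟩, ← sub_div, norm_div]
      exact (div_lt_one hc0).mpr (hconj σ)
  refine ⟨c * e, mul_mem hc heE, ?_⟩
  have hc0' : c ≠ 0 := norm_pos_iff.mp hc0
  rw [show x - c * e = c * (x / c - e) by field_simp, norm_mul]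
  exact mul_lt_of_lt_one_right hc0 he

end Conjugates

theorem Submodule.exists_norm_sub_le_of_finiteDimensional {𝕜 V : Type*}
    [NontriviallyNormedField 𝕜] [LocallyCompactSpace 𝕜] [NormedAddCommGroup V] [NormedSpace 𝕜 V]
    (S : Submodule 𝕜 V) [FiniteDimensional 𝕜 S] (x : V) :
    ∃ y ∈ S, ∀ z ∈ S, ‖x - y‖ ≤ ‖x - z‖ := by
  have := FiniteDimensional.proper 𝕜 S
  have hlim : Filter.Tendsto (fun z : S => ‖x - z‖) (Filter.cocompact S) Filter.atTop :=
    Filter.tendsto_atTop_mono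
      (fun z => by simpa [norm_sub_rev x] using norm_sub_norm_le (z : V) x)
      (Filter.tendsto_atTop_add_const_right _ (-‖x‖) tendsto_norm_cocompact_atTop)
  obtain ⟨y, hy⟩ := (continuous_const.sub continuous_subtype_val).norm.exists_forall_le hlim
  exact ⟨y, y.2, fun z hz => hy ⟨z, hz⟩⟩

theorem IsDisk.norm_sub_lt_of_mem_of_notMem {Cp : Type*} [NormedField Cp] [IsUltrametricDist Cp]
    {D : Set Cp} (hD : IsDisk D) {x x' y : Cp} (hx : x ∈ D) (hx' : x' ∈ D) (hy : y ∉ D) :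
    ‖x' - x‖ < ‖x - y‖ := by
  rw [norm_sub_rev x]
  obtain ⟨a, r, -, rfl | rfl⟩ := hD
  · have hD : {z : Cp | ‖z - a‖ ≤ r} = closedBall x r := by
      rw [← closedBall_eq_of_mem (mem_closedBall_iff_norm.mpr hx)]
      ext
      exact mem_closedBall_iff_norm.symm
    rw [hD, mem_closedBall_iff_norm] at hx' hy
    exact hx'.trans_lt (not_le.mp hy)
  · have hD : {z : Cp | ‖z - a‖ < r} = ball x r := by
      rw [← ball_eq_of_mem (mem_ball_iff_norm.mpr hx)]
      ext
      exact mem_ball_iff_norm.symm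
    rw [hD, mem_ball_iff_norm] at hx' hy
    exact hx'.trans_le (not_lt.mp hy)

section ValueGroup
variable {p : ℕ} [Fact p.Prime] {Cp : Type*} [NormedField Cp] [Algebra ℚ_[p] Cp]
  {E F : IntermediateField ℚ_[p] Cp}

theorem mem_valueGroup_iff {u : ℝˣ} : u ∈ valueGroup p Cp E ↔ ∃ x ∈ E, (u : ℝ) = ‖x‖ :=
  let S : Subgroup ℝˣ :=
    { carrier := {u | ∃ x ∈ E, (u : ℝ) = ‖x‖}
      one_mem' := ⟨1, one_mem E, by simp⟩
      mul_mem' := fun ⟨x, hx, hu⟩ ⟨y, hy, hv⟩ => ⟨x * y, mul_mem hx hy, by simp [hu, hv]⟩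
      inv_mem' := fun ⟨x, hx, hu⟩ => ⟨x⁻¹, inv_mem hx, by simp [hu]⟩ }
  SetLike.ext_iff.mp (Subgroup.closure_eq S) u

theorem exists_mem_norm_eq_of_ramIdx_eq_one (hunr : ramIdx p Cp E F = 1) {z : Cp} (hz : z ∈ F)
    (hz0 : z ≠ 0) : ∃ c ∈ E, ‖c‖ = ‖z‖ := by
  have hzF : Units.mk0 ‖z‖ (norm_ne_zero_iff.mpr hz0) ∈ valueGroup p Cp F :=
    mem_valueGroup_iff.mpr ⟨z, hz, rfl⟩
  obtain ⟨c, hc, hcz⟩ := mem_valueGroup_iff.mp (Subgroup.relIndex_eq_one.mp hunr hzF)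
  exact ⟨c, hc, hcz.symm⟩

end ValueGroup

theorem statement_1_general (p : ℕ) [Fact p.Prime] (Cp : Type*) [NormedField Cp]
    [IsUltrametricDist Cp] [Algebra ℚ_[p] Cp] [IsAlgClosed Cp]
    (halg : Algebra.IsAlgebraic ℚ_[p] Cp)
    (hnorm : ∀ x : ℚ_[p], ‖algebraMap ℚ_[p] Cp x‖ = ‖x‖)
    (E : IntermediateField ℚ_[p] Cp) [FiniteDimensional ℚ_[p] E]
    (D : Set Cp) (hD : IsDisk D)
    (hinv : ∀ σ : Cp ≃ₐ[E] Cp, σ '' D = D)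
    (F : IntermediateField ℚ_[p] Cp) (hEF : E ≤ F)
    (hunr : ramIdx p Cp E F = 1)
    (hFD : ((F : Set Cp) ∩ D).Nonempty) :
    ((E : Set Cp) ∩ D).Nonempty := by
  let : NormedAlgebra ℚ_[p] Cp :=
    { ‹Algebra ℚ_[p] Cp› with norm_smul_le c x := by rw [Algebra.smul_def, norm_mul, hnorm] }
  obtain ⟨x, hxF, hxD⟩ := hFD
  obtain ⟨y, hyE, hy⟩ := E.toSubalgebra.toSubmodule.exists_norm_sub_le_of_finiteDimensional x
  by_contra hED
  have hyD : y ∉ D := fun hyD => hED ⟨y, hyE, hyD⟩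
  have hconj (σ : Cp ≃ₐ[E] Cp) : ‖σ (x - y) - (x - y)‖ < ‖x - y‖ := by
    rw [map_sub, show σ y = y from σ.commutes ⟨y, hyE⟩, sub_sub_sub_cancel_right]
    exact hD.norm_sub_lt_of_mem_of_notMem hxD (hinv σ ▸ Set.mem_image_of_mem σ hxD) hyD
  obtain ⟨c, hcE, hc⟩ := exists_mem_norm_eq_of_ramIdx_eq_one hunr (sub_mem hxF (hEF hyE))
    (sub_ne_zero.mpr (ne_of_mem_of_not_mem hxD hyD))
  obtain ⟨e, heE, he⟩ := exists_mem_norm_sub_lt E hcE hc.ge (hc ▸ hconj)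
  refine (hy (y + e) (add_mem hyE heE)).not_gt ?_
  rwa [← sub_sub, ← hc]

/-- if a disk `D` defined over `E` meets a finite unramified extension `F`
of `E`, then it meets `E`. -/
theorem statement_1 (p : ℕ) [Fact p.Prime] (Cp : Type*) [NormedField Cp]
    [IsUltrametricDist Cp] [Algebra ℚ_[p] Cp] [IsAlgClosed Cp]
    (halg : Algebra.IsAlgebraic ℚ_[p] Cp)
    (hnorm : ∀ x : ℚ_[p], ‖algebraMap ℚ_[p] Cp x‖ = ‖x‖)
    (E : IntermediateField ℚ_[p] Cp) [FiniteDimensional ℚ_[p] E]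
    (D : Set Cp) (hD : IsDisk D)
    (hinv : ∀ σ : Cp ≃ₐ[E] Cp, σ '' D = D)
    (F : IntermediateField ℚ_[p] Cp) (hEF : E ≤ F) [FiniteDimensional ℚ_[p] F]
    (hunr : ramIdx p Cp E F = 1)
    (hFD : ((F : Set Cp) ∩ D).Nonempty) :
    ((E : Set Cp) ∩ D).Nonempty :=
  statement_1_general p Cp halg hnorm E D hD hinv F hEF hunr hFD
end

section
/- Let k be a field and (A, 𝔪) a local noetherian k-algebra of dimension 1 with residue field k. Suppose there exist z ∈ 𝔪 such that A has no z-torsion and a nilpotent ideal I with 𝔪 = (z) + I. Then e(A) = dim_k A/(z). -/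
/-!
Once `I ^ (n + 1) = 0`, expanding `(⟨z⟩ + I) ^ (n + 1)` gives `𝔪 ^ (n + 1) = z • 𝔪 ^ n`. Since `z` is
a non-zero-divisor, multiplication by `z` makes
`0 → A ⧸ 𝔪 ^ n → A ⧸ z • 𝔪 ^ n → A ⧸ (z) → 0` exact, and `k`-dimensions add along it.
-/

open IsLocalRing Pointwise

namespace Ideal

variable {R : Type*} [CommRing R]

theorem sup_pow_succ_le (a b : Ideal R) (n : ℕ) :
    (a ⊔ b) ^ (n + 1) ≤ a * (a ⊔ b) ^ n ⊔ b ^ (n + 1) := by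
  induction n with
  | zero => simp
  | succ n ih =>
    calc (a ⊔ b) ^ (n + 2) = (a ⊔ b) * (a ⊔ b) ^ (n + 1) := pow_succ' _ _
      _ ≤ (a ⊔ b) * (a * (a ⊔ b) ^ n ⊔ b ^ (n + 1)) := mul_mono_right ih
      _ = a * ((a ⊔ b) * (a ⊔ b) ^ n) ⊔ (a * b ^ (n + 1) ⊔ b ^ (n + 2)) := by
        rw [mul_sup (a ⊔ b), sup_mul a b (b ^ (n + 1)), ← pow_succ', mul_left_comm]
      _ ≤ a * (a ⊔ b) ^ (n + 1) ⊔ b ^ (n + 2) := by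
        rw [← pow_succ']
        refine sup_le le_sup_left (sup_le ?_ le_sup_right)
        exact le_sup_of_le_left (mul_mono_right (pow_right_mono le_sup_right _))

theorem sup_pow_succ_eq_mul_of_pow_eq_bot {a b : Ideal R} {n : ℕ} (hb : b ^ (n + 1) = ⊥) :
    (a ⊔ b) ^ (n + 1) = a * (a ⊔ b) ^ n :=
  le_antisymm (by simpa [hb] using sup_pow_succ_le a b n)
    (pow_succ' (a ⊔ b) n ▸ mul_mono_left le_sup_left)

end Ideal

theorem finrank_quotient_smul_eq_add (k : Type*) {A : Type*} [Field k] [CommRing A] [Algebra k A]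
    {a : A} (ha : a ∈ nonZeroDivisors A) (J : Ideal A) [Module.Finite k (A ⧸ a • J)] :
    Module.finrank k (A ⧸ a • J) =
      Module.finrank k (A ⧸ J) + Module.finrank k (A ⧸ Ideal.span {a}) := by
  have hf := J.mulQuot_injective ha
  have hg := J.quotOfMul_surjective (a := a)
  have : Module.Finite k (A ⧸ J) := .of_injective ((J.mulQuot a).restrictScalars k) hf
  have : Module.Finite k (A ⧸ Ideal.span {a}) :=
    .of_surjective ((J.quotOfMul a).restrictScalars k) hg
  have hlen := Module.length_eq_add_of_exact ((J.mulQuot a).restrictScalars k)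
    ((J.quotOfMul a).restrictScalars k) hf hg J.exact_mulQuot_quotOfMul
  simp only [Module.length_eq_finrank] at hlen
  exact_mod_cast hlen

theorem finite_quotient_maximalIdeal_pow_succ (k : Type*) {A : Type*} [Field k] [CommRing A]
    [Algebra k A] [IsNoetherianRing A] [IsLocalRing A]
    (hres : Function.Surjective ((residue A).comp (algebraMap k A))) (n : ℕ) :
    Module.Finite k (A ⧸ maximalIdeal A ^ (n + 1)) := by
  have : Module.Finite k (A ⧸ maximalIdeal A) := .of_surjective (Algebra.linearMap k _) hres
  have hle : maximalIdeal A ^ (n + 1) ≤ maximalIdeal A := Ideal.pow_le_self n.succ_ne_zero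
  refine Module.finite_of_surjective_of_ker_le_nilradical (Ideal.Quotient.factorₐ k hle)
    (Ideal.Quotient.factor_surjective hle) ?_ (IsNoetherian.noetherian _)
  intro x hx
  obtain ⟨x, rfl⟩ := Ideal.Quotient.mk_surjective x
  replace hx : x ∈ maximalIdeal A := Ideal.Quotient.eq_zero_iff_mem.mp hx
  refine mem_nilradical.mpr ⟨n + 1, ?_⟩
  rw [← map_pow, Ideal.Quotient.eq_zero_iff_mem]
  exact Ideal.pow_mem_pow hx _

theorem statement_6_general (k A : Type*) [Field k] [CommRing A] [Algebra k A]
    [IsNoetherianRing A] [IsLocalRing A]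
    (hres : Function.Bijective ((IsLocalRing.residue A).comp (algebraMap k A)))
    (z : A)
    (htor : ∀ a : A, z * a = 0 → a = 0)
    (I : Ideal A) (hI : IsNilpotent I)
    (hmax : IsLocalRing.maximalIdeal A = Ideal.span {z} ⊔ I) :
    ∃ N : ℕ, ∀ n ≥ N,
      Module.finrank k (A ⧸ (IsLocalRing.maximalIdeal A) ^ (n + 1)) =
        Module.finrank k (A ⧸ (IsLocalRing.maximalIdeal A) ^ n) +
          Module.finrank k (A ⧸ (Ideal.span {z} : Ideal A)) := by
  obtain ⟨m, hm⟩ := hI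
  refine ⟨m, fun n hn => ?_⟩
  have hIn : I ^ (n + 1) = ⊥ := by
    rw [← le_bot_iff, ← Ideal.zero_eq_bot, ← hm]
    exact Ideal.pow_le_pow_right (by omega)
  have hpow : maximalIdeal A ^ (n + 1) = z • maximalIdeal A ^ n := by
    rw [← Submodule.ideal_span_singleton_smul, smul_eq_mul, hmax]
    exact Ideal.sup_pow_succ_eq_mul_of_pow_eq_bot hIn
  have hfin := finite_quotient_maximalIdeal_pow_succ k hres.2 n
  rw [hpow] at hfin ⊢
  have hz : z ∈ nonZeroDivisors A := mem_nonZeroDivisors_iff_left.mpr htor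
  exact finrank_quotient_smul_eq_add k hz (maximalIdeal A ^ n)

/-- let `(A, 𝔪)` be a local noetherian `k`-algebra of dimension 1 with
residue field `k`.  If `z ∈ 𝔪` is such that `A` has no `z`-torsion and there is a
nilpotent ideal `I` with `𝔪 = (z) + I`, then the Hilbert–Samuel multiplicity `e(A)`
(the eventual value of `dim_k (A/𝔪^{n+1}) − dim_k (A/𝔪^n)`) equals `dim_k A/(z)`. -/
theorem statement_6 (k A : Type*) [Field k] [CommRing A] [Algebra k A]
    [IsNoetherianRing A] [IsLocalRing A]
    (hdim : ringKrullDim A = 1)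
    (hres : Function.Bijective ((IsLocalRing.residue A).comp (algebraMap k A)))
    (z : A) (hz : z ∈ IsLocalRing.maximalIdeal A)
    (htor : ∀ a : A, z * a = 0 → a = 0)
    (I : Ideal A) (hI : IsNilpotent I)
    (hmax : IsLocalRing.maximalIdeal A = Ideal.span {z} ⊔ I) :
    ∃ N : ℕ, ∀ n ≥ N,
      Module.finrank k (A ⧸ (IsLocalRing.maximalIdeal A) ^ (n + 1)) =
        Module.finrank k (A ⧸ (IsLocalRing.maximalIdeal A) ^ n) +
          Module.finrank k (A ⧸ (Ideal.span {z} : Ideal A)) :=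
  statement_6_general k A hres z htor I hI hmax
end

section
/- Let E ⊆ F be a finite separable field extension with trace form tr_{F/E}, let (e_1,…,e_n) be an E-basis of F and (u_1,…,u_n) the dual basis with respect to the trace form (tr_{F/E}(e_i u_j) = δ_{ij}). Then for any σ in the absolute Galois group of E (acting on a separable closure containing F), the sum Σ_{i=1}^n e_i · σ(u_i) equals 1 if σ fixes F pointwise, and equals 0 otherwise. -/
/-!
Over a field `Ω` in which `F/E` splits, the trace is the sum of the `[F : E]` embeddings
`τ : F →ₐ[E] Ω`. Hence, with `M i τ = τ (u i)` and `N τ j = τ (b j)`, the product `M N` is the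
Gram matrix `(tr (u i * b j))`, which is the identity by duality. Since `M` and `N` are square,
also `N M = 1`, i.e. `∑ i, τ (b i) * τ' (u i) = δ_{τ τ'}`. Taking `τ` the inclusion of `F` and
`τ' = σ ∘ τ` gives the theorem.
-/

open Module

section

variable {E F Ω : Type*} [Field E] [Field F] [Field Ω] [Algebra E F] [Algebra E Ω]
  [FiniteDimensional E F] [Algebra.IsSeparable E F]

theorem Algebra.algebraMap_trace_eq_sum_algHom_of_splits
    (hΩ : ∀ x : F, ((minpoly E x).map (algebraMap E Ω)).Splits) (x : F) :
    algebraMap E Ω (Algebra.trace E F x) = ∑ τ : F →ₐ[E] Ω, τ x := by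
  -- Mathlib's trace formula needs an algebraically closed target; both `Ω` and its closure
  -- receive exactly `[F : E]` embeddings, so composing with `Ω → Ω̄` matches them up.
  let j : Ω →ₐ[E] AlgebraicClosure Ω := IsScalarTower.toAlgHom E Ω _
  have hcomp : Function.Bijective fun τ : F →ₐ[E] Ω => j.comp τ := by
    refine (Fintype.bijective_iff_injective_and_card _).mpr ⟨?_, ?_⟩
    · exact fun τ₁ τ₂ h => AlgHom.ext fun y => j.injective (AlgHom.congr_fun h y)
    · rw [AlgHom.card_of_splits E F Ω hΩ, AlgHom.card]
  refine j.injective ?_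
  rw [AlgHom.toRingHom_eq_coe, RingHom.coe_coe, map_sum, j.commutes, trace_eq_sum_embeddings]
  exact (Fintype.sum_bijective _ hcomp _ _ fun τ => rfl).symm

open Classical in
theorem Module.Basis.sum_algHom_mul_algHom_of_traceDual
    (hΩ : ∀ x : F, ((minpoly E x).map (algebraMap E Ω)).Splits)
    {ι : Type*} [Fintype ι] [DecidableEq ι] (b : Basis ι E F) (u : ι → F)
    (hdual : ∀ i j, Algebra.trace E F (b i * u j) = if i = j then 1 else 0)
    (τ τ' : F →ₐ[E] Ω) :
    ∑ i, τ (b i) * τ' (u i) = if τ = τ' then 1 else 0 := by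
  let M : Matrix ι (F →ₐ[E] Ω) Ω := .of fun i τ => τ (u i)
  let N : Matrix (F →ₐ[E] Ω) ι Ω := .of fun τ j => τ (b j)
  have hMN : M * N = 1 := by
    ext i j
    simp only [M, N, Matrix.mul_apply, Matrix.of_apply, ← map_mul, mul_comm (u i),
      ← Algebra.algebraMap_trace_eq_sum_algHom_of_splits hΩ, hdual, Matrix.one_apply, eq_comm]
    split_ifs <;> simp
  have hcard : Fintype.card ι = Fintype.card (F →ₐ[E] Ω) := by
    rw [AlgHom.card_of_splits E F Ω hΩ, finrank_eq_card_basis b]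
  have hNM := congr_fun₂ ((Matrix.mul_eq_one_comm_of_card_eq _ _ _ hcard).mp hMN) τ τ'
  simpa [M, N, Matrix.mul_apply, Matrix.one_apply] using hNM

end

/-- let `F/E` be a finite separable extension, `(e_i)` an `E`-basis of `F`
and `(u_i)` the dual basis for the trace form.  For any `σ` in the absolute Galois group
of `E` (acting on a separably closed field `Ω` containing `F`), the sum
`Σ e_i · σ(u_i)` equals `1` if `σ` fixes `F` pointwise, and `0` otherwise. -/
theorem statement_10 (E F Ω : Type*) [Field E] [Field F] [Field Ω]
    [Algebra E F] [Algebra E Ω] [Algebra F Ω] [IsScalarTower E F Ω]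
    [FiniteDimensional E F] [Algebra.IsSeparable E F] [IsSepClosed Ω]
    {ι : Type*} [Fintype ι] [DecidableEq ι]
    (b : Module.Basis ι E F) (u : ι → F)
    (hdual : ∀ i j, Algebra.trace E F (b i * u j) = if i = j then 1 else 0)
    (σ : Ω ≃ₐ[E] Ω) :
    ((∀ x : F, σ (algebraMap F Ω x) = algebraMap F Ω x) →
      ∑ i, algebraMap F Ω (b i) * σ (algebraMap F Ω (u i)) = 1) ∧
    ((¬ ∀ x : F, σ (algebraMap F Ω x) = algebraMap F Ω x) →
      ∑ i, algebraMap F Ω (b i) * σ (algebraMap F Ω (u i)) = 0) := by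
  classical
  let τ := IsScalarTower.toAlgHom E F Ω
  have hsum := b.sum_algHom_mul_algHom_of_traceDual
    (fun x => IsSepClosed.splits_codomain _ (Algebra.IsSeparable.isSeparable E x)) u hdual
    τ ((σ : Ω →ₐ[E] Ω).comp τ)
  have hfix : τ = (σ : Ω →ₐ[E] Ω).comp τ ↔ ∀ x : F, σ (algebraMap F Ω x) = algebraMap F Ω x := by
    simp [τ, AlgHom.ext_iff, eq_comm]
  simp only [τ, IsScalarTower.coe_toAlgHom', AlgHom.comp_apply] at hsum
  constructor
  · intro h
    rwa [if_pos (hfix.mpr h)] at hsum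
  · intro h
    rwa [if_neg (mt hfix.mp h)] at hsum
end

section
/- Let E ⊆ F be a finite extension of p-adic fields, X a standard subset defined over E, and let A_E(X) and A_F(X) denote the rings of bounded analytic functions over E and F respectively (A_E(X) being the Gal-invariants of A_L(X) for L/E large Galois). Then the natural map F ⊗_E A_E(X) → A_F(X), a ⊗ f ↦ a·f, is an isomorphism of F-algebras. -/
/-!
Write `W = V^{Gal(L/E)}`. The Galois trace `v ↦ ∑ σ, ρ σ v` maps `V` into `W` and sends
`c • w` to `tr_{L/E}(c) • w` for `w ∈ W`. If `b` is an `E`-basis of `L` and `b*` its trace-dual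
basis, Dedekind's independence of characters gives `∑ i, σ (b i) * b* i = δ_{σ,1}`, hence
`v = ∑ i, b* i • ∑ σ, ρ σ (b i • v)`: so `W` spans `V` over `L`, and pairing with `b` shows that
`L ⊗_E W → V` is injective; injectivity on `F ⊗_E W` follows since `F → L` is flat.
For surjectivity onto `V^{Gal(L/F)}`, write `v = ∑ c j • w j` with `w j ∈ W` and choose `d` with
`tr_{L/F} d = 1`; the relative trace of `d • v` is both `v` and `∑ tr_{L/F}(d * c j) • w j`.
-/

open TensorProduct

section Descent

variable (E L V : Type*) [Field E] [Field L] [Algebra E L]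
  [FiniteDimensional E L] [IsGalois E L]
  [AddCommGroup V] [Module E V] [Module L V] [IsScalarTower E L V]

/-- The invariants of a semilinear action of `Gal(L/E)` on `V`. -/
noncomputable def galInvariants (ρ : (L ≃ₐ[E] L) →* Module.End E V) : Submodule E V :=
  ⨅ σ : L ≃ₐ[E] L, LinearMap.eqLocus (ρ σ) (LinearMap.id)

/-- The invariants of `V` under the subgroup of `Gal(L/E)` fixing an intermediate
field `F` pointwise. -/
noncomputable def galInvariantsOver (ρ : (L ≃ₐ[E] L) →* Module.End E V)
    (F : IntermediateField E L) : Submodule E V :=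
  ⨅ σ : {σ : L ≃ₐ[E] L // ∀ x : F, σ (x : L) = (x : L)},
    LinearMap.eqLocus (ρ σ.1) (LinearMap.id)

/-- The natural map `F ⊗_E V^{Gal(L/E)} → V`, `a ⊗ v ↦ a • v`. -/
noncomputable def descentMap (ρ : (L ≃ₐ[E] L) →* Module.End E V)
    (F : IntermediateField E L) :
    (↥F ⊗[E] ↥(galInvariants E L V ρ)) →ₗ[E] V :=
  TensorProduct.lift <|
    LinearMap.mk₂ E (fun (a : ↥F) (v : ↥(galInvariants E L V ρ)) => (a : L) • (v : V))
      (fun a b v => by push_cast; rw [add_smul])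
      (fun c a v => by
        show ((c • a : ↥F) : L) • (v : V) = c • ((a : L) • (v : V))
        rw [show ((c • a : ↥F) : L) = c • (a : L) from rfl, smul_assoc])
      (fun a v w => by push_cast; rw [smul_add])
      (fun c a v => by
        show (a : L) • ((c • v : ↥(galInvariants E L V ρ)) : V) = c • ((a : L) • (v : V))
        rw [show ((c • v : ↥(galInvariants E L V ρ)) : V) = c • (v : V) from rfl, smul_comm])

end Descent

section Trace

variable {K L V : Type*} [Field K] [Field L] [Algebra K L] [FiniteDimensional K L] [IsGalois K L]
  [AddCommGroup V] [Module L V]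

theorem sum_semilinear_smul_eq_trace_smul (φ : (L ≃ₐ[K] L) → V → V)
    (hφ : ∀ σ (c : L) v, φ σ (c • v) = σ c • φ σ v) {w : V} (hw : ∀ σ, φ σ w = w) (c : L) :
    ∑ σ, φ σ (c • w) = algebraMap K L (Algebra.trace K L c) • w := by
  simp only [hφ, hw, ← Finset.sum_smul, trace_eq_sum_automorphisms]

open Classical in
theorem sum_aut_mul_traceDual {ι : Type*} [Fintype ι] [DecidableEq ι] (b : Module.Basis ι K L)
    (σ : L ≃ₐ[K] L) :
    ∑ i, σ (b i) * b.traceDual i = if σ = 1 then 1 else 0 := by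
  set c : (L ≃ₐ[K] L) → L := fun τ ↦ ∑ i, τ (b i) * b.traceDual i
  have hexpand : ∀ x : L, ∑ τ : L ≃ₐ[K] L, c τ * τ x = x := by
    intro x
    conv_rhs => rw [← b.traceDual.sum_repr x]
    simp only [Module.Basis.traceDual_repr_apply, Algebra.traceForm_apply, Algebra.smul_def,
      trace_eq_sum_automorphisms, c, Finset.sum_mul]
    rw [Finset.sum_comm]
    refine Fintype.sum_congr _ _ fun i ↦ Fintype.sum_congr _ _ fun τ ↦ ?_
    rw [map_mul]; ring
  have hdedekind : LinearIndependent L (fun τ : L ≃ₐ[K] L ↦ (τ : L → L)) :=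
    (linearIndependent_monoidHom L L).comp (fun τ : L ≃ₐ[K] L ↦ (τ : L →* L))
      fun τ τ' h ↦ AlgEquiv.ext (DFunLike.congr_fun h :)
  refine sub_eq_zero.mp <| Fintype.linearIndependent_iff.mp hdedekind
    (fun τ ↦ c τ - if τ = 1 then 1 else 0) (funext fun x ↦ ?_) σ
  simp [sub_smul, Finset.sum_sub_distrib, hexpand x, ite_apply]

end Trace

section GaloisDescent

variable {E L V : Type*} [Field E] [Field L] [Algebra E L] [AddCommGroup V] [Module E V]
  (ρ : (L ≃ₐ[E] L) →* Module.End E V)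

theorem mem_galInvariants_iff {v : V} : v ∈ galInvariants E L V ρ ↔ ∀ σ, ρ σ v = v := by
  simp only [galInvariants, Submodule.mem_iInf, LinearMap.mem_eqLocus, LinearMap.id_apply]

theorem mem_galInvariantsOver_iff {F : IntermediateField E L} {v : V} :
    v ∈ galInvariantsOver E L V ρ F ↔ ∀ σ : L ≃ₐ[E] L, (∀ x : F, σ x = x) → ρ σ v = v := by
  simp only [galInvariantsOver, Submodule.mem_iInf, LinearMap.mem_eqLocus, LinearMap.id_apply,
    Subtype.forall]

theorem sum_mem_galInvariants [FiniteDimensional E L] (v : V) :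
    ∑ σ, ρ σ v ∈ galInvariants E L V ρ := by
  rw [mem_galInvariants_iff]
  intro τ
  simp only [map_sum, ← Module.End.mul_apply, ← map_mul]
  exact Fintype.sum_equiv (Equiv.mulLeft τ) _ _ fun _ ↦ rfl

theorem span_galInvariants_eq_top [FiniteDimensional E L] [IsGalois E L] [Module L V]
    (hsemi : ∀ (σ : L ≃ₐ[E] L) (c : L) (v : V), ρ σ (c • v) = σ c • ρ σ v) :
    Submodule.span L (galInvariants E L V ρ : Set V) = ⊤ := by
  classical
  refine Submodule.eq_top_iff'.mpr fun v ↦ ?_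
  let b := Module.finBasis E L
  have hv : v = ∑ i, b.traceDual i • ∑ σ, ρ σ (b i • v) := by
    simp only [hsemi, Finset.smul_sum, smul_smul]
    rw [Finset.sum_comm]
    simp only [← Finset.sum_smul, mul_comm (b.traceDual _), sum_aut_mul_traceDual, ite_smul,
      one_smul, zero_smul, Finset.sum_ite_eq', Finset.mem_univ, if_true, map_one,
      Module.End.one_apply]
  rw [hv]
  exact Submodule.sum_mem _ fun i _ ↦
    Submodule.smul_mem _ _ (Submodule.subset_span (sum_mem_galInvariants ρ _))

variable [Module L V] [IsScalarTower E L V]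

theorem descentMap_eq_liftBaseChange_comp_rTensor (F : IntermediateField E L) :
    descentMap E L V ρ F = ((galInvariants E L V ρ).subtype.liftBaseChange L).restrictScalars E ∘ₗ
      F.val.toLinearMap.rTensor _ :=
  TensorProduct.ext' fun _ _ ↦ rfl

theorem range_descentMap_le
    (hsemi : ∀ (σ : L ≃ₐ[E] L) (c : L) (v : V), ρ σ (c • v) = σ c • ρ σ v)
    (F : IntermediateField E L) :
    LinearMap.range (descentMap E L V ρ F) ≤ galInvariantsOver E L V ρ F := by
  rintro _ ⟨t, rfl⟩
  induction t using TensorProduct.induction_on with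
  | zero => simp
  | tmul a u =>
    refine (mem_galInvariantsOver_iff ρ).mpr fun σ hσ ↦ ?_
    change ρ σ ((a : L) • (u : V)) = (a : L) • (u : V)
    rw [hsemi, hσ, (mem_galInvariants_iff ρ).mp u.2]
  | add x y hx hy => exact map_add (descentMap E L V ρ F) x y ▸ add_mem hx hy

variable [FiniteDimensional E L] [IsGalois E L]

theorem liftBaseChange_galInvariants_subtype_injective
    (hsemi : ∀ (σ : L ≃ₐ[E] L) (c : L) (v : V), ρ σ (c • v) = σ c • ρ σ v) :
    Function.Injective ((galInvariants E L V ρ).subtype.liftBaseChange L) := by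
  rw [injective_iff_map_eq_zero]
  intro t ht
  let b := Module.finBasis E L
  obtain ⟨u, rfl⟩ := TensorProduct.eq_repr_basis_left b.traceDual t
  suffices u = 0 by simp [this]
  ext j
  rw [map_finsuppSum, Finsupp.sum_fintype _ _ (by simp)] at ht
  simp only [LinearMap.liftBaseChange_tmul, Submodule.subtype_apply] at ht
  have hfix : ∀ i σ, ρ σ (u i : V) = u i := fun i ↦ (mem_galInvariants_iff ρ).mp (u i).2
  calc (u j : V)
      = ∑ i, algebraMap E L (Algebra.trace E L (b j * b.traceDual i)) • (u i : V) := by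
        simp
    _ = ∑ σ, ρ σ (b j • ∑ i, b.traceDual i • (u i : V)) := by
        simp only [Finset.smul_sum, smul_smul, map_sum]
        rw [Finset.sum_comm]
        simp only [sum_semilinear_smul_eq_trace_smul (fun σ ↦ ρ σ) hsemi (hfix _)]
    _ = 0 := by simp [ht]

theorem descentMap_injective
    (hsemi : ∀ (σ : L ≃ₐ[E] L) (c : L) (v : V), ρ σ (c • v) = σ c • ρ σ v)
    (F : IntermediateField E L) : Function.Injective (descentMap E L V ρ F) := by
  rw [descentMap_eq_liftBaseChange_comp_rTensor]
  exact (liftBaseChange_galInvariants_subtype_injective ρ hsemi).comp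
    (Module.Flat.rTensor_preserves_injective_linearMap _ F.val.injective)

theorem galInvariantsOver_le_range_descentMap
    (hsemi : ∀ (σ : L ≃ₐ[E] L) (c : L) (v : V), ρ σ (c • v) = σ c • ρ σ v)
    (F : IntermediateField E L) :
    galInvariantsOver E L V ρ F ≤ LinearMap.range (descentMap E L V ρ F) := by
  intro v hv
  let φ : (L ≃ₐ[F] L) → V → V := fun τ ↦ ρ (τ.restrictScalars E)
  have hφ : ∀ τ (c : L) v, φ τ (c • v) = τ c • φ τ v := fun τ ↦ hsemi _
  have hfix : ∀ τ, φ τ v = v := fun τ ↦ (mem_galInvariantsOver_iff ρ).mp hv _ τ.commutes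
  obtain ⟨d, hd⟩ := Algebra.trace_surjective F L 1
  obtain ⟨n, c, w, hw⟩ := Submodule.mem_span_set'.mp
    (span_galInvariants_eq_top ρ hsemi ▸ Submodule.mem_top : v ∈ Submodule.span L _)
  have hv : v = ∑ i, algebraMap F L (Algebra.trace F L (d * c i)) • (w i : V) := by
    have hwfix : ∀ i τ, φ τ (w i : V) = w i := fun i τ ↦ (mem_galInvariants_iff ρ).mp (w i).2 _
    calc v = ∑ τ, φ τ (d • v) := by
          rw [sum_semilinear_smul_eq_trace_smul φ hφ hfix, hd, map_one, one_smul]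
      _ = _ := by
          conv_lhs => rw [← hw]
          simp only [Finset.smul_sum, smul_smul, φ, map_sum]
          rw [Finset.sum_comm]
          exact Fintype.sum_congr _ _ fun i ↦ sum_semilinear_smul_eq_trace_smul φ hφ (hwfix i) _
  rw [hv]
  exact Submodule.sum_mem _ fun i _ ↦ ⟨⟨_, (Algebra.trace F L (d * c i)).2⟩ ⊗ₜ w i, rfl⟩

end GaloisDescent

/-- abstract Galois-descent form, as in the context: for a finite Galois
extension `L/E`, an `L`-vector space `V` with a semilinear action of `Gal(L/E)`, and an
intermediate field `F`, the natural map `F ⊗_E V^{Gal(L/E)} → V^{Gal(L/F)}`,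
`a ⊗ f ↦ a • f`, is an isomorphism: it is injective and its range is exactly the
submodule of `Gal(L/F)`-invariants.  (For `V = A_L(X)` the ring of bounded analytic
functions of a standard subset `X` defined over `E`, with `A_E(X) = V^{Gal(L/E)}`,
this says that `F ⊗_E A_E(X) → A_F(X)` is an isomorphism.) -/
theorem statement_11 (E L V : Type*) [Field E] [Field L] [Algebra E L]
    [FiniteDimensional E L] [IsGalois E L]
    [AddCommGroup V] [Module E V] [Module L V] [IsScalarTower E L V]
    (ρ : (L ≃ₐ[E] L) →* Module.End E V)
    (hsemi : ∀ (σ : L ≃ₐ[E] L) (c : L) (v : V), ρ σ (c • v) = σ c • ρ σ v)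
    (F : IntermediateField E L) :
    Function.Injective (descentMap E L V ρ F) ∧
      LinearMap.range (descentMap E L V ρ F) = galInvariantsOver E L V ρ F :=
  ⟨descentMap_injective ρ hsemi F,
    (range_descentMap_le ρ hsemi F).antisymm (galInvariantsOver_le_range_descentMap ρ hsemi F)⟩
end

section
/- Let E be a finite extension of ℚ_p, D an open disk defined over E, s the smallest degree over E of an element of D, a ∈ D of degree s over E, and λ ∈ ℝ such that D = {x : v_E(x - a) > λ}. Let P ∈ E[X] be a polynomial of degree < s and write P(X + a) = Σ_{i=0}^{s-1} b_i X^i. Then v_E(b_i) ≥ v_E(b_0) − i·λ for all i. -/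
open Polynomial

/-- Newton polygon argument: if every root of `Q` has norm at least `r`, then
`‖Q.coeff i‖ * r ^ i ≤ ‖Q.coeff 0‖` for all `i`. -/
lemma statement_12_aux {K : Type*} [NormedField K] [IsUltrametricDist K] [IsAlgClosed K]
    {r : ℝ} (hr : 0 < r) :
    ∀ n (Q : K[X]), Q.natDegree ≤ n → (∀ y : K, Q.IsRoot y → r ≤ ‖y‖) →
      ∀ i, ‖Q.coeff i‖ * r ^ i ≤ ‖Q.coeff 0‖ := by
  intro n
  induction n with
  | zero =>
    intro Q hQ _ i
    have hQ0 : Q.natDegree = 0 := Nat.le_zero.mp hQ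
    obtain ⟨c, rfl⟩ := Polynomial.natDegree_eq_zero.mp hQ0
    cases i with
    | zero => simp
    | succ j =>
      rw [Polynomial.coeff_C]
      simp [pow_nonneg hr.le]
  | succ n ih =>
    intro Q hQ hroots
    rcases Nat.lt_or_ge Q.natDegree (n + 1) with h | h
    · exact ih Q (Nat.lt_succ_iff.mp h) hroots
    have hdeg : Q.natDegree = n + 1 := le_antisymm hQ h
    have hQne : Q ≠ 0 := by
      intro h0; rw [h0] at hdeg; simp at hdeg
    have hdeg' : Q.degree ≠ 0 := by
      rw [Polynomial.degree_eq_natDegree hQne, hdeg]; exact_mod_cast Nat.succ_ne_zero n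
    obtain ⟨y, hy⟩ := IsAlgClosed.exists_root Q hdeg'
    set Q₁ : K[X] := Q /ₘ (X - C y) with hQ₁def
    have hfac : (X - C y) * Q₁ = Q := (mul_divByMonic_eq_iff_isRoot).mpr hy
    have hry : r ≤ ‖y‖ := hroots y hy
    have hQ₁deg : Q₁.natDegree ≤ n := by
      have h1 := Polynomial.natDegree_divByMonic Q (monic_X_sub_C y)
      rw [← hQ₁def, Polynomial.natDegree_X_sub_C] at h1
      omega
    have hQ₁roots : ∀ z : K, Q₁.IsRoot z → r ≤ ‖z‖ := by
      intro z hz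
      refine hroots z ?_
      rw [← hfac]
      simp [Polynomial.IsRoot, hz.eq_zero]
    have IH := ih Q₁ hQ₁deg hQ₁roots
    -- coefficient relations
    have hc0 : ‖Q.coeff 0‖ = ‖y‖ * ‖Q₁.coeff 0‖ := by
      rw [← hfac, Polynomial.mul_coeff_zero]
      simp [norm_mul]
    intro i
    cases i with
    | zero => simp
    | succ j =>
      have hcoeff : Q.coeff (j + 1) = Q₁.coeff j - y * Q₁.coeff (j + 1) := by
        rw [← hfac, sub_mul, Polynomial.coeff_sub, Polynomial.coeff_X_mul]
        simp [Polynomial.coeff_C_mul]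
      have hub : ‖Q.coeff (j + 1)‖ ≤ max ‖Q₁.coeff j‖ (‖y‖ * ‖Q₁.coeff (j + 1)‖) := by
        rw [hcoeff, sub_eq_add_neg]
        refine (IsUltrametricDist.norm_add_le_max _ _).trans ?_
        simp [norm_mul]
      have hrpos : (0:ℝ) < r ^ (j + 1) := pow_pos hr _
      calc ‖Q.coeff (j + 1)‖ * r ^ (j + 1)
          ≤ max ‖Q₁.coeff j‖ (‖y‖ * ‖Q₁.coeff (j + 1)‖) * r ^ (j + 1) :=
            mul_le_mul_of_nonneg_right hub hrpos.le
        _ ≤ ‖y‖ * ‖Q₁.coeff 0‖ := by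
            rw [max_mul_of_nonneg _ _ hrpos.le, max_le_iff]
            constructor
            · -- ‖Q₁.coeff j‖ * r^(j+1) = (‖Q₁.coeff j‖ * r^j) * r ≤ ‖Q₁.coeff 0‖ * r ≤ ‖y‖ * ‖Q₁.coeff 0‖
              have h1 : ‖Q₁.coeff j‖ * r ^ (j + 1) = (‖Q₁.coeff j‖ * r ^ j) * r := by ring
              rw [h1]
              calc (‖Q₁.coeff j‖ * r ^ j) * r ≤ ‖Q₁.coeff 0‖ * r :=
                    mul_le_mul_of_nonneg_right (IH j) hr.le
                _ ≤ ‖Q₁.coeff 0‖ * ‖y‖ :=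
                    mul_le_mul_of_nonneg_left hry (norm_nonneg _)
                _ = ‖y‖ * ‖Q₁.coeff 0‖ := mul_comm _ _
            · have h2 : ‖y‖ * ‖Q₁.coeff (j + 1)‖ * r ^ (j + 1)
                  = ‖y‖ * (‖Q₁.coeff (j + 1)‖ * r ^ (j + 1)) := by ring
              rw [h2]
              exact mul_le_mul_of_nonneg_left (IH (j + 1)) (norm_nonneg _)
        _ = ‖Q.coeff 0‖ := hc0.symm

/-- let `D = {x : v_E(x - a) > λ}` be an open disk defined over `E`, `s`
the smallest degree over `E` of an element of `D`, and `a ∈ D` of degree `s` over `E`.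
If `P ∈ E[X]` has degree `< s` and `P(X + a) = Σ b_i X^i`, then
`v_E(b_i) ≥ v_E(b_0) − i·λ` for all `i`.  Here the disk is written multiplicatively as
`D = {x : ‖x - a‖ < r}` (with `r = p^{-λ/e_E}` arbitrary positive), and the conclusion
`v_E(b_i) ≥ v_E(b_0) − i·λ` becomes `‖b_i‖ · r^i ≤ ‖b_0‖` (which also handles
vanishing coefficients correctly). -/
theorem statement_12 (p : ℕ) [Fact p.Prime] (Cp : Type*) [NormedField Cp]
    [IsUltrametricDist Cp] [Algebra ℚ_[p] Cp] [IsAlgClosed Cp]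
    (halg : Algebra.IsAlgebraic ℚ_[p] Cp)
    (hnorm : ∀ x : ℚ_[p], ‖algebraMap ℚ_[p] Cp x‖ = ‖x‖)
    (E : IntermediateField ℚ_[p] Cp) [FiniteDimensional ℚ_[p] E]
    (a : Cp) (r : ℝ) (hr : 0 < r)
    (D : Set Cp) (hD : D = {x | ‖x - a‖ < r})
    (hinv : ∀ σ : Cp ≃ₐ[E] Cp, σ '' D = D)
    (s : ℕ)
    (hs : Module.finrank ↥E ↥(IntermediateField.adjoin (↥E) {a}) = s)
    (hmin : ∀ b ∈ D, s ≤ Module.finrank ↥E ↥(IntermediateField.adjoin (↥E) {b}))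
    (P : Polynomial Cp) (hPE : ∀ i, P.coeff i ∈ E) (hPdeg : P.degree < s) :
    ∀ i : ℕ,
      ‖(P.comp (X + C a)).coeff i‖ * r ^ i ≤ ‖(P.comp (X + C a)).coeff 0‖ := by
  by_cases hP0 : P = 0
  · intro i
    simp [hP0, pow_nonneg hr.le]
  -- P ≠ 0 from here on
  have hPnatdeg : P.natDegree < s := by
    rwa [← Polynomial.natDegree_lt_iff_degree_lt hP0] at hPdeg
  -- descend P to a polynomial over E
  set P' : Polynomial E :=
    ∑ i ∈ Finset.range (P.natDegree + 1), Polynomial.C (⟨P.coeff i, hPE i⟩ : E) * X ^ i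
    with hP'def
  have hmap : P'.map (algebraMap E Cp) = P := by
    rw [hP'def]
    have hcoe : ∀ c : E, algebraMap E Cp c = (c : Cp) := fun c => rfl
    simp only [Polynomial.map_sum, Polynomial.map_mul, Polynomial.map_pow,
      Polynomial.map_C, Polynomial.map_X, Polynomial.map_monomial, hcoe,
      Polynomial.C_mul_X_pow_eq_monomial]
    exact (P.as_sum_range' (P.natDegree + 1) (Nat.lt_succ_self _)).symm
  have hP'0 : P' ≠ 0 := by
    intro h0
    apply hP0
    rw [← hmap, h0, Polynomial.map_zero]
  have hP'deg : P'.natDegree = P.natDegree := by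
    conv_rhs => rw [← hmap]
    exact (Polynomial.natDegree_map_eq_of_injective
      (algebraMap E Cp).injective P').symm
  -- all roots of Q = P.comp (X + C a) have norm ≥ r
  set Q : Polynomial Cp := P.comp (X + C a) with hQdef
  have hroots : ∀ y : Cp, Q.IsRoot y → r ≤ ‖y‖ := by
    intro y hy
    by_contra hlt
    push_neg at hlt
    have hb : y + a ∈ D := by
      rw [hD]
      simpa using hlt
    have hrootP : P.IsRoot (y + a) := by
      have := hy
      rw [hQdef, Polynomial.IsRoot, Polynomial.eval_comp] at this
      simpa [add_comm] using this
    have haeval : Polynomial.aeval (y + a) P' = 0 := by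
      rw [Polynomial.aeval_def, Polynomial.eval₂_eq_eval_map, hmap]
      exact hrootP
    have hint : IsIntegral E (y + a) :=
      IsAlgebraic.isIntegral ⟨P', hP'0, haeval⟩
    have hfinrank :
        Module.finrank ↥E ↥(IntermediateField.adjoin (↥E) {y + a})
          = (minpoly E (y + a)).natDegree := IntermediateField.adjoin.finrank hint
    have hdvd : minpoly E (y + a) ∣ P' := minpoly.dvd E (y + a) haeval
    have hle : (minpoly E (y + a)).natDegree ≤ P'.natDegree :=
      Polynomial.natDegree_le_of_dvd hdvd hP'0
    have := hmin (y + a) hb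
    rw [hfinrank] at this
    omega
  intro i
  have hQdeg : Q.natDegree ≤ Q.natDegree := le_rfl
  exact statement_12_aux hr Q.natDegree Q le_rfl hroots i
end

section
/- Let E be a finite extension of ℚ_p, D a closed disk defined over E, s the smallest degree over E of an element of D, a ∈ D of degree s over E, and λ such that D = {x : v_E(x - a) ≥ λ}. If P ∈ E[X] has degree < s and P(X + a) = Σ_{i=0}^{s-1} b_i X^i, then v_E(b_i) > v_E(b_0) − i·λ for all i > 0. -/
open Polynomial

lemma aux_roots {Cp : Type*} [NormedField Cp] [IsUltrametricDist Cp] [IsAlgClosed Cp]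
    {r : ℝ} (hr : 0 < r) :
    ∀ n (Q : Polynomial Cp), Q.natDegree = n → Q ≠ 0 →
      (∀ z, Q.IsRoot z → r < ‖z‖) → ∀ i, 0 < i → ‖Q.coeff i‖ * r ^ i < ‖Q.coeff 0‖ := by
  intro n
  induction n using Nat.strong_induction_on with
  | _ n IH =>
    intro Q hQn hQ0 hroots i hi
    rcases Nat.eq_zero_or_pos n with h0 | hpos
    · have hc : Q.coeff i = 0 := Q.coeff_eq_zero_of_natDegree_lt (by omega)
      have h00 : Q.coeff 0 ≠ 0 := by
        have := Polynomial.leadingCoeff_ne_zero.mpr hQ0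
        rwa [Polynomial.leadingCoeff, hQn, h0] at this
      rw [hc]
      simpa using norm_pos_iff.mpr h00
    · obtain ⟨z, hz⟩ := IsAlgClosed.exists_root Q
        (by rw [Polynomial.degree_eq_natDegree hQ0, hQn]; exact_mod_cast hpos.ne')
      obtain ⟨Q₁, hQ₁⟩ := (Polynomial.dvd_iff_isRoot.mpr hz)
      have hQ₁0 : Q₁ ≠ 0 := by rintro rfl; simp at hQ₁; exact hQ0 hQ₁
      have hdeg : Q₁.natDegree = n - 1 := by
        have := Polynomial.natDegree_mul (p := X - C z) (q := Q₁) (X_sub_C_ne_zero z) hQ₁0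
        rw [← hQ₁, Polynomial.natDegree_X_sub_C, hQn] at this
        omega
      have hroots₁ : ∀ w, Q₁.IsRoot w → r < ‖w‖ := by
        intro w hw
        exact hroots w (by simp [Polynomial.IsRoot, hQ₁, hw.eq_zero])
      have hQ₁c0 : Q₁.coeff 0 ≠ 0 := by
        intro h
        have : Q₁.IsRoot 0 := by rwa [Polynomial.IsRoot, ← Polynomial.coeff_zero_eq_eval_zero]
        have := hroots₁ 0 this
        simp at this; linarith
      have hzr : r < ‖z‖ := hroots z hz
      have hz0 : (0:ℝ) < ‖z‖ := lt_trans hr hzr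
      have hcoeff0 : Q.coeff 0 = -(z * Q₁.coeff 0) := by
        rw [hQ₁, Polynomial.mul_coeff_zero]
        simp
      have hnorm0 : ‖Q.coeff 0‖ = ‖z‖ * ‖Q₁.coeff 0‖ := by
        rw [hcoeff0, norm_neg, norm_mul]
      obtain ⟨j, rfl⟩ : ∃ j, i = j + 1 := ⟨i - 1, by omega⟩
      have hcoeffi : Q.coeff (j+1) = Q₁.coeff j - z * Q₁.coeff (j+1) := by
        rw [hQ₁, sub_mul, Polynomial.coeff_sub, Polynomial.coeff_X_mul,
          Polynomial.coeff_C_mul]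
      have hub : ‖Q.coeff (j+1)‖ ≤ max ‖Q₁.coeff j‖ (‖z‖ * ‖Q₁.coeff (j+1)‖) := by
        rw [hcoeffi, sub_eq_add_neg]
        refine (IsUltrametricDist.norm_add_le_max _ _).trans ?_
        rw [norm_neg, norm_mul]
      have hrp : (0:ℝ) < r ^ (j+1) := pow_pos hr _
      rw [hnorm0]
      calc ‖Q.coeff (j+1)‖ * r ^ (j+1)
          ≤ max (‖Q₁.coeff j‖ * r ^ (j+1)) (‖z‖ * ‖Q₁.coeff (j+1)‖ * r ^ (j+1)) := by
            rw [← max_mul_of_nonneg _ _ hrp.le]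
            exact mul_le_mul_of_nonneg_right hub hrp.le
        _ < ‖z‖ * ‖Q₁.coeff 0‖ := by
            apply max_lt
            · rcases Nat.eq_zero_or_pos j with rfl | hj
              · simpa [mul_comm] using (mul_lt_mul_of_pos_left hzr
                  (norm_pos_iff.mpr hQ₁c0))
              · have h1 : ‖Q₁.coeff j‖ * r ^ j < ‖Q₁.coeff 0‖ :=
                  IH (n-1) (by omega) Q₁ hdeg hQ₁0 hroots₁ j hj
                calc ‖Q₁.coeff j‖ * r ^ (j+1) = (‖Q₁.coeff j‖ * r ^ j) * r := by ring
                  _ < ‖Q₁.coeff 0‖ * r := by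
                      exact mul_lt_mul_of_pos_right h1 hr
                  _ < ‖Q₁.coeff 0‖ * ‖z‖ := by
                      exact mul_lt_mul_of_pos_left hzr (norm_pos_iff.mpr hQ₁c0)
                  _ = ‖z‖ * ‖Q₁.coeff 0‖ := mul_comm _ _
            · rcases eq_or_ne (Q₁.coeff (j+1)) 0 with h | h
              · rw [h]; simp
                exact mul_pos hz0 (norm_pos_iff.mpr hQ₁c0)
              · have h1 : ‖Q₁.coeff (j+1)‖ * r ^ (j+1) < ‖Q₁.coeff 0‖ :=
                  IH (n-1) (by omega) Q₁ hdeg hQ₁0 hroots₁ (j+1) (by omega)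
                calc ‖z‖ * ‖Q₁.coeff (j+1)‖ * r ^ (j+1)
                    = ‖z‖ * (‖Q₁.coeff (j+1)‖ * r ^ (j+1)) := by ring
                  _ < ‖z‖ * ‖Q₁.coeff 0‖ := mul_lt_mul_of_pos_left h1 hz0


/-- let `D = {x : v_E(x - a) ≥ λ}` be a closed disk defined over `E`, `s`
the smallest degree over `E` of an element of `D`, and `a ∈ D` of degree `s` over `E`.
If `P ∈ E[X]` is nonzero of degree `< s` and `P(X + a) = Σ b_i X^i`, then
`v_E(b_i) > v_E(b_0) − i·λ` for all `i > 0`.  Here the disk is written multiplicatively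
as `D = {x : ‖x - a‖ ≤ r}` (with `r = p^{-λ/e_E}` arbitrary positive), and the strict
inequality `v_E(b_i) > v_E(b_0) − i·λ` becomes `‖b_i‖ · r^i < ‖b_0‖`. -/
theorem statement_13 (p : ℕ) [Fact p.Prime] (Cp : Type*) [NormedField Cp]
    [IsUltrametricDist Cp] [Algebra ℚ_[p] Cp] [IsAlgClosed Cp]
    (halg : Algebra.IsAlgebraic ℚ_[p] Cp)
    (hnorm : ∀ x : ℚ_[p], ‖algebraMap ℚ_[p] Cp x‖ = ‖x‖)
    (E : IntermediateField ℚ_[p] Cp) [FiniteDimensional ℚ_[p] E]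
    (a : Cp) (r : ℝ) (hr : 0 < r)
    (D : Set Cp) (hD : D = {x | ‖x - a‖ ≤ r})
    (hinv : ∀ σ : Cp ≃ₐ[E] Cp, σ '' D = D)
    (s : ℕ)
    (hs : Module.finrank ↥E ↥(IntermediateField.adjoin (↥E) {a}) = s)
    (hmin : ∀ b ∈ D, s ≤ Module.finrank ↥E ↥(IntermediateField.adjoin (↥E) {b}))
    (P : Polynomial Cp) (hP0 : P ≠ 0) (hPE : ∀ i, P.coeff i ∈ E) (hPdeg : P.degree < s) :
    ∀ i : ℕ, 0 < i →
      ‖(P.comp (X + C a)).coeff i‖ * r ^ i < ‖(P.comp (X + C a)).coeff 0‖ := by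
  set Q := P.comp (X + C a) with hQdef
  -- Q ≠ 0
  have hQP : Q.comp (X - C a) = P := by
    rw [hQdef, Polynomial.comp_assoc]
    simp
  have hQ0 : Q ≠ 0 := by
    intro h
    rw [h] at hQP
    simp at hQP
    exact hP0 hQP.symm
  -- lift P to E[X]
  set Pe : Polynomial ↥E := ∑ i ∈ P.support, Polynomial.C (⟨P.coeff i, hPE i⟩ : ↥E) * X ^ i
    with hPe
  have hmap : Pe.map (algebraMap ↥E Cp) = P := by
    rw [hPe, Polynomial.map_sum]
    conv_rhs => rw [P.as_sum_support]
    refine Finset.sum_congr rfl fun i _ => ?_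
    rw [Polynomial.map_mul, Polynomial.map_C, Polynomial.map_pow, Polynomial.map_X,
      Polynomial.C_mul_X_pow_eq_monomial]
    rfl
  have hPe0 : Pe ≠ 0 := by
    intro h
    rw [h, Polynomial.map_zero] at hmap
    exact hP0 hmap.symm
  have hPenat : Pe.natDegree = P.natDegree := by
    rw [← hmap]
    exact (Polynomial.natDegree_map_eq_of_injective
      (algebraMap ↥E Cp).injective Pe).symm
  have hs1 : P.natDegree < s := by
    rwa [← Polynomial.natDegree_lt_iff_degree_lt hP0] at hPdeg
  intro i hi
  by_cases hex : ∃ z, Q.IsRoot z ∧ ‖z‖ ≤ r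
  · exfalso
    obtain ⟨z, hz, hzr⟩ := hex
    set b := z + a with hb
    have hbD : b ∈ D := by
      rw [hD]
      simpa [hb] using hzr
    have hPb : P.eval b = 0 := by
      have := hz.eq_zero
      rwa [hQdef, Polynomial.eval_comp, Polynomial.eval_add, Polynomial.eval_X,
        Polynomial.eval_C] at this
    have haev : Polynomial.aeval b Pe = 0 := by
      rw [Polynomial.aeval_def, ← Polynomial.eval_map, hmap, hPb]
    have hbalg : IsIntegral ↥E b := (IsAlgebraic.isIntegral ⟨Pe, hPe0, haev⟩)
    have hdegle : (minpoly ↥E b).natDegree ≤ Pe.natDegree :=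
      Polynomial.natDegree_le_natDegree (minpoly.degree_le_of_ne_zero ↥E b hPe0 haev)
    have := hmin b hbD
    rw [IntermediateField.adjoin.finrank hbalg] at this
    omega
  · push_neg at hex
    exact aux_roots hr Q.natDegree Q rfl hQ0 (fun z hz => hex z hz) i hi
end

section
/- Let K be a field, A a commutative K-algebra, and φ an A-linear endomorphism of A² whose characteristic polynomial has coefficients in K and is split over K with two distinct roots λ, μ ∈ K. Then there exist f_1, f_2 ∈ A with (f_1, f_2) the unit ideal of A, such that over each localization A[1/f_j] there is a basis of A[1/f_j]² in which the matrix of φ is diag(λ, μ). -/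
open Matrix Polynomial

private lemma key_aux₁ {R : Type*} [CommRing R] (p q r s L M u v : R)
    (htr : p + s = L + M) (hdet : p*s - q*r = L*M) (hu : u*(L-M) = 1)
    (hv : v * (u*(p-M)) = 1) :
    ∃ P Pi : Matrix (Fin 2) (Fin 2) R, P*Pi = 1 ∧ Pi*P = 1 ∧
      !![p,q;r,s] = P * !![L,0;0,M] * Pi := by
  set a := u*(p-M) with ha
  set b := u*q with hb
  set c := u*r with hc
  set d := u*(s-M) with hd
  have h1 : a + d = 1 := by rw [ha, hd]; linear_combination u*htr + hu
  have h2 : a*d = b*c := by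
    rw [ha, hd, hb, hc]; linear_combination u^2*hdet - u^2*M*htr
  have h3 : (L-M)*c = r := by rw [hc]; linear_combination r*hu
  have h4 : (L-M)*b = q := by rw [hb]; linear_combination q*hu
  have h5 : L*a + M*d = p := by rw [ha, hd]; linear_combination u*M*htr + p*hu
  have h6 : L*d + M*a = s := by rw [ha, hd]; linear_combination u*M*htr + s*hu
  refine ⟨!![1, -(v*b); v*c, 1], !![a, b; -c, a], ?_, ?_, ?_⟩ <;>
    ext i j <;>
    fin_cases i <;> fin_cases j <;>
    simp [Matrix.mul_apply, Fin.sum_univ_two]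
  · linear_combination (-v)*h2 + d*hv + h1
  · linear_combination (-b)*hv
  · linear_combination c*hv
  · linear_combination (-v)*h2 + d*hv + h1
  · linear_combination (-v)*h2 + d*hv + h1
  · linear_combination (-b)*hv
  · linear_combination c*hv
  · linear_combination (-v)*h2 + d*hv + h1
  · linear_combination (v*M)*h2 + (-(M*d))*hv - h5
  · linear_combination (M*b)*hv - h4
  · linear_combination (-(L*c))*hv - h3
  · linear_combination (v*L)*h2 + (-(L*d))*hv - h6

private lemma key_aux₂ {R : Type*} [CommRing R] (p q r s L M u v : R)
    (htr : p + s = L + M) (hdet : p*s - q*r = L*M) (hu : u*(L-M) = 1)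
    (hv : v * (u*(s-M)) = 1) :
    ∃ P Pi : Matrix (Fin 2) (Fin 2) R, P*Pi = 1 ∧ Pi*P = 1 ∧
      !![p,q;r,s] = P * !![L,0;0,M] * Pi := by
  set a := u*(p-M) with ha
  set b := u*q with hb
  set c := u*r with hc
  set d := u*(s-M) with hd
  have h1 : a + d = 1 := by rw [ha, hd]; linear_combination u*htr + hu
  have h2 : a*d = b*c := by
    rw [ha, hd, hb, hc]; linear_combination u^2*hdet - u^2*M*htr
  have h3 : (L-M)*c = r := by rw [hc]; linear_combination r*hu
  have h4 : (L-M)*b = q := by rw [hb]; linear_combination q*hu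
  have h5 : L*a + M*d = p := by rw [ha, hd]; linear_combination u*M*htr + p*hu
  have h6 : L*d + M*a = s := by rw [ha, hd]; linear_combination u*M*htr + s*hu
  refine ⟨!![v*b, 1; 1, -(v*c)], !![c, d; d, -b], ?_, ?_, ?_⟩ <;>
    ext i j <;>
    fin_cases i <;> fin_cases j <;>
    simp [Matrix.mul_apply, Fin.sum_univ_two]
  · linear_combination (-v)*h2 + a*hv + h1
  · linear_combination b*hv
  · linear_combination (-c)*hv
  · linear_combination (-v)*h2 + a*hv + h1
  · linear_combination (-v)*h2 + a*hv + h1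
  · linear_combination (-c)*hv
  · linear_combination b*hv
  · linear_combination (-v)*h2 + a*hv + h1
  · linear_combination (v*L)*h2 + (-(L*a))*hv - h5
  · linear_combination (-(L*b))*hv - h4
  · linear_combination (M*c)*hv - h3
  · linear_combination (v*M)*h2 + (-(M*a))*hv - h6

/-- let `K` be a field, `A` a commutative `K`-algebra, and `φ` an
`A`-linear endomorphism of `A²` whose characteristic polynomial lies in `K[X]` and is
split over `K` with distinct roots `λ, μ ∈ K`.  Then there exist `f₁, f₂ ∈ A`
generating the unit ideal such that over each localization `A[1/f_j]`, `φ` is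
diagonalizable, i.e. conjugate by an invertible matrix to `diag(λ, μ)`. -/
theorem statement_15 (K A : Type*) [Field K] [CommRing A] [Algebra K A]
    (φ : Matrix (Fin 2) (Fin 2) A) (lam mu : K) (hne : lam ≠ mu)
    (hcp : φ.charpoly =
      (X - C (algebraMap K A lam)) * (X - C (algebraMap K A mu))) :
    ∃ f₁ f₂ : A, Ideal.span {f₁, f₂} = ⊤ ∧
      ∀ f : A, f = f₁ ∨ f = f₂ →
        ∃ P : GeneralLinearGroup (Fin 2) (Localization.Away f),
          φ.map (algebraMap A (Localization.Away f)) =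
            (P : Matrix (Fin 2) (Fin 2) (Localization.Away f))
              * Matrix.diagonal
                  ![((algebraMap A (Localization.Away f)).comp (algebraMap K A)) lam,
                    ((algebraMap A (Localization.Away f)).comp (algebraMap K A)) mu]
              * ((P⁻¹ : GeneralLinearGroup (Fin 2) (Localization.Away f)) :
                  Matrix (Fin 2) (Fin 2) (Localization.Away f)) := by
  have hu : algebraMap K A (lam - mu)⁻¹ *
      (algebraMap K A lam - algebraMap K A mu) = 1 := by
    rw [← map_sub, ← _root_.map_mul, inv_mul_cancel₀ (sub_ne_zero.2 hne), _root_.map_one]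
  set lA := algebraMap K A lam with hlA
  set mA := algebraMap K A mu with hmA
  set uA := algebraMap K A (lam - mu)⁻¹ with huA
  have hprod : (X - C lA) * (X - C mA) = X^2 - (C lA + C mA) * X + C (lA*mA) := by
    push_cast [C_mul]; ring
  rw [hprod] at hcp
  have htr0 := φ.trace_eq_neg_charpoly_coeff
  have hdet0 := φ.det_eq_sign_charpoly_coeff
  rw [hcp] at htr0 hdet0
  simp [Matrix.trace_fin_two, coeff_one, coeff_X] at htr0
  simp [Matrix.det_fin_two, coeff_one, coeff_X] at hdet0
  have htr : φ 0 0 + φ 1 1 = lA + mA := by linear_combination htr0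
  have hdet : φ 0 0 * φ 1 1 - φ 0 1 * φ 1 0 = lA * mA := by linear_combination hdet0
  refine ⟨uA * (φ 0 0 - mA), uA * (φ 1 1 - mA), ?_, ?_⟩
  · rw [Ideal.eq_top_iff_one]
    have hsum : uA * (φ 0 0 - mA) + uA * (φ 1 1 - mA) = 1 := by
      linear_combination uA * htr + hu
    rw [← hsum]
    exact Ideal.add_mem _ (Ideal.subset_span (by simp)) (Ideal.subset_span (by simp))
  · rintro f (rfl | rfl)
    · set R := Localization.Away (uA * (φ 0 0 - mA)) with hR
      set g := algebraMap A R with hg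
      obtain ⟨w, hw⟩ := IsLocalization.Away.algebraMap_isUnit
        (S := R) (uA * (φ 0 0 - mA))
      have hv : (↑w⁻¹ : R) * (g uA * (g (φ 0 0) - g mA)) = 1 := by
        rw [← map_sub, ← _root_.map_mul, ← hw]; exact w.inv_mul
      have htr' : g (φ 0 0) + g (φ 1 1) = g lA + g mA := by
        rw [← map_add, ← map_add, htr]
      have hdet' : g (φ 0 0) * g (φ 1 1) - g (φ 0 1) * g (φ 1 0) = g lA * g mA := by
        rw [← _root_.map_mul, ← _root_.map_mul, ← map_sub, ← _root_.map_mul, hdet]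
      have hu' : g uA * (g lA - g mA) = 1 := by
        rw [← map_sub, ← _root_.map_mul, hu, _root_.map_one]
      obtain ⟨P, Pi, hPPi, hPiP, heq⟩ :=
        key_aux₁ (g (φ 0 0)) (g (φ 0 1)) (g (φ 1 0)) (g (φ 1 1))
          (g lA) (g mA) (g uA) (↑w⁻¹) htr' hdet' hu' hv
      refine ⟨⟨P, Pi, hPPi, hPiP⟩, ?_⟩
      have hφm : φ.map g = !![g (φ 0 0), g (φ 0 1); g (φ 1 0), g (φ 1 1)] := by
        ext i j; fin_cases i <;> fin_cases j <;> simp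
      have hD : Matrix.diagonal ![(g.comp (algebraMap K A)) lam,
          (g.comp (algebraMap K A)) mu] = !![g lA, 0; 0, g mA] := by
        ext i j; fin_cases i <;> fin_cases j <;>
          simp [hlA, hmA]
      rw [hφm, hD]
      exact heq
    · set R := Localization.Away (uA * (φ 1 1 - mA)) with hR
      set g := algebraMap A R with hg
      obtain ⟨w, hw⟩ := IsLocalization.Away.algebraMap_isUnit
        (S := R) (uA * (φ 1 1 - mA))
      have hv : (↑w⁻¹ : R) * (g uA * (g (φ 1 1) - g mA)) = 1 := by
        rw [← map_sub, ← _root_.map_mul, ← hw]; exact w.inv_mul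
      have htr' : g (φ 0 0) + g (φ 1 1) = g lA + g mA := by
        rw [← map_add, ← map_add, htr]
      have hdet' : g (φ 0 0) * g (φ 1 1) - g (φ 0 1) * g (φ 1 0) = g lA * g mA := by
        rw [← _root_.map_mul, ← _root_.map_mul, ← map_sub, ← _root_.map_mul, hdet]
      have hu' : g uA * (g lA - g mA) = 1 := by
        rw [← map_sub, ← _root_.map_mul, hu, _root_.map_one]
      obtain ⟨P, Pi, hPPi, hPiP, heq⟩ :=
        key_aux₂ (g (φ 0 0)) (g (φ 0 1)) (g (φ 1 0)) (g (φ 1 1))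
          (g lA) (g mA) (g uA) (↑w⁻¹) htr' hdet' hu' hv
      refine ⟨⟨P, Pi, hPPi, hPiP⟩, ?_⟩
      have hφm : φ.map g = !![g (φ 0 0), g (φ 0 1); g (φ 1 0), g (φ 1 1)] := by
        ext i j; fin_cases i <;> fin_cases j <;> simp
      have hD : Matrix.diagonal ![(g.comp (algebraMap K A)) lam,
          (g.comp (algebraMap K A)) mu] = !![g lA, 0; 0, g mA] := by
        ext i j; fin_cases i <;> fin_cases j <;>
          simp [hlA, hmA]
      rw [hφm, hD]
      exact heq
end
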